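/- arXiv:2303.00791 — 11 statements merged into one kernel-verified Lean document; each statement's English description precedes it below -/
import Mathlib

section
/- Let C be an n×(n+m) integer ordinal matrix (distinct entries in each row with c_{i,i} < c_{i,k} < c_{i,j} for all i≠j in [n] and k in [n+m]\[n]) and let D be an ordinal basis of C, i.e., a set of n columns such that for every column h there exists a row i with u_i ≥ c_{i,h}, where u_i = min over columns j in D of c_{i,j}. Then for every column j in D there is exactly one row i with u_i = c_{i,j}; in particular the map sending each column of D to its unique row minimizer is a bijection between D and [n]. -/
/-- `C` is an ordinal matrix: each row has distinct entries and
`c_{i,i} < c_{i,k} < c_{i,j}` for `i ≠ j` among the first `n` columns and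
`k` among the last `m` columns. -/
def IsOrdinalMatrix (n m : ℕ) (C : Fin n → Fin (n + m) → ℤ) : Prop :=
  (∀ i : Fin n, Function.Injective (C i)) ∧
  ∀ i j : Fin n, i ≠ j → ∀ k : Fin (n + m), n ≤ (k : ℕ) →
    C i (Fin.castAdd m i) < C i k ∧ C i k < C i (Fin.castAdd m j)

/-- `D` is an ordinal basis of `C`: a set of `n` columns such that for every
column `h` there is a row `i` whose minimum over `D` is at least `C i h`. -/
def IsOrdinalBasis (n m : ℕ) (C : Fin n → Fin (n + m) → ℤ)
    (D : Finset (Fin (n + m))) : Prop :=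
  D.card = n ∧ ∀ h : Fin (n + m), ∃ i : Fin n, ∀ j ∈ D, C i h ≤ C i j

/-- For every column `j` of an ordinal basis `D` there is exactly one row `i`
whose row minimum over `D` is attained at `j`; in particular, assigning to each
column of `D` its unique row minimizer gives a bijection between `D` and `Fin n`. -/
theorem ordinalBasis_unique_row_minimizer (n m : ℕ)
    (C : Fin n → Fin (n + m) → ℤ) (hC : IsOrdinalMatrix n m C)
    (D : Finset (Fin (n + m))) (hD : IsOrdinalBasis n m C D) :
    (∀ j ∈ D, ∃! i : Fin n, ∀ j' ∈ D, C i j ≤ C i j') ∧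
    ∃ f : {j // j ∈ D} ≃ Fin n,
      ∀ j : {j // j ∈ D}, ∀ j' ∈ D, C (f j) (j : Fin (n + m)) ≤ C (f j) j' := by
  obtain ⟨hinj, -⟩ := hC
  obtain ⟨hcard, hbasis⟩ := hD
  have hne : ∀ _ : Fin n, D.Nonempty := fun i => by
    rw [← Finset.card_pos, hcard]; exact i.pos
  choose g hg1 hg2 using fun i : Fin n => D.exists_min_image (C i) (hne i)
  have huniq : ∀ (i : Fin n) (j : Fin (n + m)), j ∈ D →
      (∀ j' ∈ D, C i j ≤ C i j') → g i = j := by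
    intro i j hj hmin
    exact hinj i (le_antisymm (hg2 i j hj) (hmin (g i) (hg1 i)))
  set mz : Fin n → {j // j ∈ D} := fun i => ⟨g i, hg1 i⟩ with hmz
  have hsurj : Function.Surjective mz := by
    rintro ⟨j, hj⟩
    obtain ⟨i, hi⟩ := hbasis j
    exact ⟨i, Subtype.ext (huniq i j hj hi)⟩
  have hbij : Function.Bijective mz := by
    refine ⟨?_, hsurj⟩
    have : Fintype.card {j // j ∈ D} = Fintype.card (Fin n) := by
      simp [hcard]
    exact (Fintype.bijective_iff_surjective_and_card mz).2 ⟨hsurj, this.symm⟩ |>.1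
  constructor
  · intro j hj
    obtain ⟨i, hi⟩ := hbasis j
    refine ⟨i, hi, ?_⟩
    intro i' hi'
    have h1 : mz i' = mz i := by
      simp only [hmz]
      exact Subtype.ext ((huniq i' j hj hi').trans (huniq i j hj hi).symm)
    exact hbij.1 h1
  · refine ⟨(Equiv.ofBijective mz hbij).symm, ?_⟩
    intro j j' hj'
    have h1 : mz ((Equiv.ofBijective mz hbij).symm j) = j :=
      (Equiv.ofBijective mz hbij).apply_symm_apply j
    have h2 : g ((Equiv.ofBijective mz hbij).symm j) = (j : Fin (n + m)) :=
      congrArg Subtype.val h1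
    have := hg2 ((Equiv.ofBijective mz hbij).symm j) j' hj'
    rwa [h2] at this
end

section
/- Let D be an ordinal basis of an ordinal matrix C, let j_ℓ ∈ D, and suppose D \ {j_ℓ} is not contained in the first n columns of C. Then there exists a unique column j* ∉ D such that (D \ {j_ℓ}) ∪ {j*} is an ordinal basis of C. Moreover, j* and j_ℓ are the only two columns j for which (D \ {j_ℓ}) ∪ {j} is an ordinal basis. -/
/-- Ordinal pivot: if `D` is an ordinal basis, `jℓ ∈ D`, and `D \ {jℓ}` is not
contained in the first `n` columns, then there is a unique column `j* ∉ D` such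
that `(D \ {jℓ}) ∪ {j*}` is an ordinal basis; moreover `j*` and `jℓ` are the only
columns whose insertion into `D \ {jℓ}` yields an ordinal basis. -/
theorem ordinal_pivot_unique (n m : ℕ)
    (C : Fin n → Fin (n + m) → ℤ) (hC : IsOrdinalMatrix n m C)
    (D : Finset (Fin (n + m))) (hD : IsOrdinalBasis n m C D)
    (jℓ : Fin (n + m)) (hjℓ : jℓ ∈ D)
    (hout : ∃ j ∈ D.erase jℓ, n ≤ (j : ℕ)) :
    ∃ jstar : Fin (n + m), jstar ∉ D ∧
      IsOrdinalBasis n m C (insert jstar (D.erase jℓ)) ∧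
      ∀ j : Fin (n + m), IsOrdinalBasis n m C (insert j (D.erase jℓ)) →
        j = jstar ∨ j = jℓ := by
  classical
  obtain ⟨hDcard, hDdom⟩ := hD
  obtain ⟨hrow, hord⟩ := hC
  obtain ⟨jb, hjbB, hjbn⟩ := hout
  set B := D.erase jℓ with hB
  have hjbD : jb ∈ D := Finset.mem_of_mem_erase hjbB
  -- the argmin function α : rows → D
  have hex : ∀ i : Fin n, ∃ a ∈ D, ∀ b ∈ D, C i a ≤ C i b :=
    fun i => D.exists_min_image (C i) ⟨jℓ, hjℓ⟩
  choose α hαD hαmin using hex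
  have huniq : ∀ (i : Fin n) (d : Fin (n + m)), d ∈ D → C i d ≤ C i (α i) → d = α i := by
    intro i d hd hle
    exact hrow i (le_antisymm hle (hαmin i d hd))
  have hsurj : ∀ d ∈ D, ∃ i, α i = d := by
    intro d hd
    obtain ⟨i, hi⟩ := hDdom d
    exact ⟨i, (huniq i d hd (hi (α i) (hαD i))).symm⟩
  have himg : Finset.univ.image α = D := by
    apply Finset.Subset.antisymm
    · intro d hd
      obtain ⟨i, _, rfl⟩ := Finset.mem_image.mp hd
      exact hαD i
    · intro d hd
      obtain ⟨i, hi⟩ := hsurj d hd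
      exact Finset.mem_image.mpr ⟨i, Finset.mem_univ i, hi⟩
  have hαinj : Function.Injective α := by
    have h1 : (Finset.univ.image α).card = (Finset.univ : Finset (Fin n)).card := by
      rw [himg, hDcard]
      simp
    have h2 := Finset.injOn_of_card_image_eq h1
    intro a b hab
    exact h2 (Finset.mem_coe.mpr (Finset.mem_univ a)) (Finset.mem_coe.mpr (Finset.mem_univ b)) hab
  -- the row iℓ served by jℓ
  obtain ⟨iℓ, hiℓ⟩ := hsurj jℓ hjℓ
  -- the second-best column j₀ of row iℓ, and its row i₀
  have hBne : B.Nonempty := ⟨jb, hjbB⟩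
  obtain ⟨j₀, hj₀B, hj₀min⟩ := B.exists_min_image (C iℓ) hBne
  have hj₀D : j₀ ∈ D := Finset.mem_of_mem_erase hj₀B
  have hj₀jℓ : j₀ ≠ jℓ := Finset.ne_of_mem_erase hj₀B
  obtain ⟨i₀, hi₀⟩ := hsurj j₀ hj₀D
  have hne : i₀ ≠ iℓ := by
    intro h
    apply hj₀jℓ
    rw [← hi₀, h, hiℓ]
  have hαB : ∀ i : Fin n, i ≠ iℓ → α i ∈ B := by
    intro i hi
    refine Finset.mem_erase.mpr ⟨?_, hαD i⟩
    intro h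
    exact hi (hαinj (h.trans hiℓ.symm))
  -- j₀ is a tail column
  have hj₀n : n ≤ (j₀ : ℕ) := by
    by_contra hlt
    push_neg at hlt
    have hj₀t : j₀ = Fin.castAdd m ⟨(j₀ : ℕ), hlt⟩ := by
      apply Fin.ext
      rfl
    by_cases ht : (⟨(j₀ : ℕ), hlt⟩ : Fin n) = iℓ
    · -- j₀ = col iℓ : contradiction at row i₀
      have h1 := (hord i₀ iℓ hne jb hjbn).2
      rw [← ht, ← hj₀t] at h1
      have h2 := hαmin i₀ jb hjbD
      rw [hi₀] at h2
      exact absurd h2 (not_le.mpr h1)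
    · have h1 := (hord iℓ ⟨(j₀ : ℕ), hlt⟩ (fun h => ht h.symm) jb hjbn).2
      rw [← hj₀t] at h1
      exact absurd (hj₀min jb hjbB) (not_le.mpr h1)
  -- key comparison lemma: anything at most C i jb is below any foreign head column
  have L2 : ∀ (i s : Fin n), i ≠ s → ∀ d : Fin (n + m),
      C i d ≤ C i jb → C i d < C i (Fin.castAdd m s) := by
    intro i s his d hle
    by_cases hd : n ≤ (d : ℕ)
    · exact (hord i s his d hd).2
    · push_neg at hd
      have hdt : d = Fin.castAdd m ⟨(d : ℕ), hd⟩ := by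
        apply Fin.ext
        rfl
      by_cases ht : (⟨(d : ℕ), hd⟩ : Fin n) = i
      · rw [hdt, ht]
        exact lt_trans (hord i s his jb hjbn).1 (hord i s his jb hjbn).2
      · exfalso
        have h1 := (hord i ⟨(d : ℕ), hd⟩ (fun h => ht h.symm) jb hjbn).2
        rw [← hdt] at h1
        exact absurd hle (not_le.mpr h1)
  -- the candidate set T
  set T : Finset (Fin (n + m)) := Finset.univ.filter
    (fun h => C i₀ h < C i₀ j₀ ∧ C iℓ j₀ < C iℓ h ∧
      ∀ i : Fin n, i ≠ iℓ → i ≠ i₀ → C i (α i) < C i h) with hT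
  have heT : Fin.castAdd m i₀ ∈ T := by
    rw [hT, Finset.mem_filter]
    refine ⟨Finset.mem_univ _, ?_, ?_, ?_⟩
    · exact (hord i₀ iℓ hne j₀ hj₀n).1
    · exact (hord iℓ i₀ hne.symm j₀ hj₀n).2
    · intro i h1 h2
      exact L2 i i₀ h2 (α i) (hαmin i jb hjbD)
  obtain ⟨jstar, hjsT, hjsmax⟩ := T.exists_max_image (C i₀) ⟨_, heT⟩
  rw [hT, Finset.mem_filter] at hjsT
  obtain ⟨-, hjs1, hjs2, hjs3⟩ := hjsT
  have hjsD : jstar ∉ D := by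
    intro h
    have h2 := hαmin i₀ jstar h
    rw [hi₀] at h2
    exact absurd h2 (not_le.mpr hjs1)
  have hn1 : 1 ≤ n := by
    have := Finset.card_pos.mpr ⟨jℓ, hjℓ⟩
    omega
  refine ⟨jstar, hjsD, ⟨?_, ?_⟩, ?_⟩
  · -- cardinality
    rw [Finset.card_insert_of_notMem (fun h => hjsD (Finset.mem_of_mem_erase h)),
      Finset.card_erase_of_mem hjℓ, hDcard]
    omega
  · -- domination for the new basis
    intro h
    obtain ⟨i1, hi1⟩ := hDdom h
    by_cases hc1 : i1 = iℓ
    · subst hc1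
      refine ⟨i1, ?_⟩
      intro d hd
      rcases Finset.mem_insert.mp hd with rfl | hdB
      · have h1 : C i1 h ≤ C i1 jℓ := hi1 jℓ hjℓ
        have h2 : C i1 jℓ ≤ C i1 j₀ := by
          have := hαmin i1 j₀ hj₀D
          rwa [hiℓ] at this
        linarith [hjs2]
      · exact hi1 d (Finset.mem_of_mem_erase hdB)
    · by_cases hc2 : i1 = i₀
      · rw [hc2] at hi1
        by_cases hsub1 : C iℓ h ≤ C iℓ j₀
        · refine ⟨iℓ, ?_⟩
          intro d hd
          rcases Finset.mem_insert.mp hd with rfl | hdB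
          · linarith [hjs2]
          · exact le_trans hsub1 (hj₀min d hdB)
        · by_cases hsub2 : ∃ i : Fin n, i ≠ iℓ ∧ i ≠ i₀ ∧ C i h ≤ C i (α i)
          · obtain ⟨i, hi1', hi2', hi3'⟩ := hsub2
            refine ⟨i, ?_⟩
            intro d hd
            rcases Finset.mem_insert.mp hd with rfl | hdB
            · linarith [hjs3 i hi1' hi2']
            · exact le_trans hi3' (hαmin i d (Finset.mem_of_mem_erase hdB))
          · push_neg at hsub1 hsub2
            have hhT : h ∈ T := by
              rw [hT, Finset.mem_filter]
              refine ⟨Finset.mem_univ _, ?_, hsub1, ?_⟩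
              · have h1 : C i₀ h ≤ C i₀ j₀ := hi1 j₀ hj₀D
                refine lt_of_le_of_ne h1 (fun hEq => ?_)
                have := hrow i₀ hEq
                subst this
                exact absurd le_rfl (not_le.mpr hsub1)
              · intro i ha hb
                exact hsub2 i ha hb
            refine ⟨i₀, ?_⟩
            intro d hd
            rcases Finset.mem_insert.mp hd with rfl | hdB
            · exact hjsmax h hhT
            · exact hi1 d (Finset.mem_of_mem_erase hdB)
      · refine ⟨i1, ?_⟩
        intro d hd
        rcases Finset.mem_insert.mp hd with rfl | hdB
        · linarith [hi1 (α i1) (hαD i1), hjs3 i1 hc1 hc2]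
        · exact hi1 d (Finset.mem_of_mem_erase hdB)
  · -- uniqueness
    intro j hj
    by_cases hjjl : j = jℓ
    · exact Or.inr hjjl
    left
    obtain ⟨hjcard, hjdom⟩ := hj
    have hjB : j ∉ B := by
      intro hmem
      rw [Finset.insert_eq_self.mpr hmem, Finset.card_erase_of_mem hjℓ, hDcard] at hjcard
      omega
    have hjD : j ∉ D := fun hmem => hjB (Finset.mem_erase.mpr ⟨hjjl, hmem⟩)
    -- U1 : C iℓ jℓ < C iℓ j
    have hU1 : C iℓ jℓ < C iℓ j := by
      obtain ⟨i2, hi2⟩ := hjdom jℓ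
      have hi2l : i2 = iℓ := by
        by_contra hne2
        have h1 : C i2 jℓ ≤ C i2 (α i2) :=
          hi2 (α i2) (Finset.mem_insert_of_mem (hαB i2 hne2))
        have h2 := huniq i2 jℓ hjℓ h1
        exact hne2 (hαinj (h2 ▸ hiℓ).symm)
      subst hi2l
      have h1 := hi2 j (Finset.mem_insert_self j B)
      refine lt_of_le_of_ne h1 (fun hEq => hjjl (hrow i2 hEq.symm))
    -- U34 : rows other than iℓ, i₀ strictly prefer their own column to j
    have hU34 : ∀ i : Fin n, i ≠ iℓ → i ≠ i₀ → C i (α i) < C i j := by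
      intro i hil hi0
      by_contra hle
      push_neg at hle
      obtain ⟨i3, hi3⟩ := hjdom (α i)
      have hαiB : α i ∈ B := hαB i hil
      by_cases h3l : i3 = iℓ
      · subst h3l
        have h1 : C i3 (α i) ≤ C i3 j₀ := hi3 j₀ (Finset.mem_insert_of_mem hj₀B)
        have h2 : α i = j₀ := hrow i3 (le_antisymm h1 (hj₀min _ hαiB))
        exact hi0 (hαinj (h2.trans hi₀.symm))
      · by_cases h3i : i3 = i
        · subst h3i
          have h1 := hi3 j (Finset.mem_insert_self j B)
          exact hjD ((hrow i3 (le_antisymm hle h1)).symm ▸ hαD i3)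
        · have h1 := hi3 (α i3) (Finset.mem_insert_of_mem (hαB i3 h3l))
          exact h3i (hαinj (huniq i3 (α i) (hαD i) h1)).symm
    -- C i₀ j < C i₀ j₀
    have hi0j : C i₀ j < C i₀ j₀ := by
      obtain ⟨i4, hi4⟩ := hDdom j
      by_cases h4l : i4 = iℓ
      · subst h4l
        exact absurd (hi4 jℓ hjℓ) (not_le.mpr hU1)
      · by_cases h40 : i4 = i₀
        · subst h40
          have h1 := hi4 j₀ hj₀D
          refine lt_of_le_of_ne h1 (fun hEq => hjD ((hrow i4 hEq) ▸ hj₀D))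
        · exact absurd (hi4 (α i4) (hαD i4)) (not_le.mpr (hU34 i4 h4l h40))
    -- U5 : C iℓ j₀ < C iℓ j
    have hU5 : C iℓ j₀ < C iℓ j := by
      obtain ⟨i5, hi5⟩ := hjdom j₀
      by_cases h5l : i5 = iℓ
      · subst h5l
        have h1 := hi5 j (Finset.mem_insert_self j B)
        refine lt_of_le_of_ne h1 (fun hEq => ?_)
        have h2 := hrow i5 hEq
        exact hjD (h2 ▸ hj₀D)
      · by_cases h50 : i5 = i₀
        · subst h50
          exact absurd (hi5 j (Finset.mem_insert_self j B)) (not_le.mpr hi0j)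
        · have h1 := hi5 (α i5) (Finset.mem_insert_of_mem (hαB i5 h5l))
          have h2 := huniq i5 j₀ hj₀D h1
          exact (h50 ((hαinj ((h2 ▸ hi₀) : α i₀ = α i5)).symm)).elim
    -- hence j ∈ T
    have hjT : j ∈ T := by
      rw [hT, Finset.mem_filter]
      exact ⟨Finset.mem_univ _, hi0j, hU5, hU34⟩
    have hmax := hjsmax j hjT
    -- U6 : conclude j = jstar
    obtain ⟨i6, hi6⟩ := hjdom jstar
    by_cases h6l : i6 = iℓ
    · subst h6l
      exact absurd (hi6 j₀ (Finset.mem_insert_of_mem hj₀B)) (not_le.mpr hjs2)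
    · by_cases h60 : i6 = i₀
      · subst h60
        have h1 := hi6 j (Finset.mem_insert_self j B)
        exact hrow i6 (le_antisymm hmax h1)
      · have h1 := hi6 (α i6) (Finset.mem_insert_of_mem (hαB i6 h6l))
        exact absurd h1 (not_le.mpr (hjs3 i6 h6l h60))
end

section
/- Consider an ordinal pivot removing column j_ℓ from ordinal basis D and introducing the unique column j* so that D' = (D \ {j_ℓ}) ∪ {j*} is again an ordinal basis. Let i_ℓ be the row whose minimizer in D was attained at column j_ℓ, let j_r be the reference column (the unique column of D \ {j_ℓ} containing two row minimizers of the reduced utility vector), and let i_r be the row whose minimizer in D was attained at j_r. Then the utility vectors u of D and u' of D' satisfy u'_{i_ℓ} > u_{i_ℓ}, u'_{i_r} < u_{i_r}, and u'_i = u_i for all i ∉ {i_ℓ, i_r}. -/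
/-- Change of the utility vector in an ordinal pivot `D → D' = (D \ {jℓ}) ∪ {j*}`:
the utility of the row `iℓ` (whose minimum in `D` was attained at the leaving
column `jℓ`) strictly increases, the utility of the row `ir` (whose minimum in
`D` was attained at the reference column `jr`) strictly decreases, and all other
utilities are unchanged. -/
theorem ordinal_pivot_utility_change (n m : ℕ)
    (C : Fin n → Fin (n + m) → ℤ) (hC : IsOrdinalMatrix n m C)
    (D : Finset (Fin (n + m))) (hD : IsOrdinalBasis n m C D)
    (hne : D.Nonempty)
    (jℓ jr jstar : Fin (n + m)) (iℓ ir : Fin n)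
    (hjℓ : jℓ ∈ D)
    (herase : (D.erase jℓ).Nonempty)
    -- `jℓ` attains the minimum of row `iℓ` over `D`:
    (hiℓ : ∀ j ∈ D, C iℓ jℓ ≤ C iℓ j)
    -- the reference column `jr` attains the reduced minimum `ū` in row `iℓ` ...
    (hjr : jr ∈ D.erase jℓ)
    (hrefℓ : ∀ j ∈ D.erase jℓ, C iℓ jr ≤ C iℓ j)
    (hnew : C iℓ jℓ < C iℓ jr)
    -- ... and in row `ir`, where it was already the minimizer over `D`:
    (hir : ∀ j ∈ D, C ir jr ≤ C ir j)
    (hiℓir : iℓ ≠ ir)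
    -- the entering column `j*`: it lies in `K` and maximizes `C ir ·` over `K`
    (hjs : jstar ∉ D)
    (hK : ∀ i : Fin n, i ≠ ir → (D.erase jℓ).inf' herase (C i) < C i jstar)
    (hmax : ∀ k : Fin (n + m),
      (∀ i : Fin n, i ≠ ir → (D.erase jℓ).inf' herase (C i) < C i k) →
      C ir k ≤ C ir jstar)
    (hD' : IsOrdinalBasis n m C (insert jstar (D.erase jℓ))) :
    D.inf' hne (C iℓ) <
        (insert jstar (D.erase jℓ)).inf' (Finset.insert_nonempty _ _) (C iℓ) ∧
    (insert jstar (D.erase jℓ)).inf' (Finset.insert_nonempty _ _) (C ir) <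
        D.inf' hne (C ir) ∧
    ∀ i : Fin n, i ≠ iℓ → i ≠ ir →
      (insert jstar (D.erase jℓ)).inf' (Finset.insert_nonempty _ _) (C i) =
        D.inf' hne (C i) := by

  obtain ⟨hinj, -⟩ := hC
  obtain ⟨hcard, hbasis⟩ := hD
  have hsub : D.erase jℓ ⊆ D := Finset.erase_subset _ _
  have hjrD : jr ∈ D := hsub hjr
  -- argmin function
  choose f hfD hfmin using fun i : Fin n => D.exists_min_image (C i) hne
  have hfuniq : ∀ (i : Fin n) (h : Fin (n + m)), h ∈ D →
      (∀ j ∈ D, C i h ≤ C i j) → h = f i := by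
    intro i h hh hmin
    exact hinj i (le_antisymm (hmin (f i) (hfD i)) (hfmin i h hh))
  have hfsurj : ∀ h ∈ D, ∃ i, f i = h := by
    intro h hh
    obtain ⟨i, hi⟩ := hbasis h
    exact ⟨i, (hfuniq i h hh hi).symm⟩
  have himg : Finset.univ.image f = D := by
    apply Finset.Subset.antisymm
    · intro h hh
      simp only [Finset.mem_image] at hh
      obtain ⟨i, -, rfl⟩ := hh
      exact hfD i
    · intro h hh
      obtain ⟨i, rfl⟩ := hfsurj h hh
      exact Finset.mem_image_of_mem f (Finset.mem_univ i)
  have hfinj : Function.Injective f := by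
    have hci : (Finset.univ.image f).card = (Finset.univ : Finset (Fin n)).card := by
      rw [himg, hcard, Finset.card_univ, Fintype.card_fin]
      
    intro a b hab
    exact (Finset.card_image_iff.mp hci) (Finset.mem_coe.mpr (Finset.mem_univ a))
      (Finset.mem_coe.mpr (Finset.mem_univ b)) hab
  have hfiℓ : f iℓ = jℓ := (hfuniq iℓ jℓ hjℓ hiℓ).symm
  have hfir : f ir = jr := (hfuniq ir jr hjrD hir).symm
  -- basic inf' values
  have hUiℓ : D.inf' hne (C iℓ) = C iℓ jℓ :=
    le_antisymm (Finset.inf'_le _ hjℓ) (Finset.le_inf' _ _ hiℓ)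
  have hUir : D.inf' hne (C ir) = C ir jr :=
    le_antisymm (Finset.inf'_le _ hjrD) (Finset.le_inf' _ _ hir)
  have hEiℓ : (D.erase jℓ).inf' herase (C iℓ) = C iℓ jr :=
    le_antisymm (Finset.inf'_le _ hjr) (Finset.le_inf' _ _ hrefℓ)
  have hEir : (D.erase jℓ).inf' herase (C ir) = C ir jr :=
    le_antisymm (Finset.inf'_le _ hjr)
      (Finset.le_inf' _ _ fun j hj => hir j (hsub hj))
  -- for i ≠ iℓ, the minimum over D equals the minimum over D.erase jℓ
  have hsame : ∀ i : Fin n, i ≠ iℓ →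
      (D.erase jℓ).inf' herase (C i) = D.inf' hne (C i) := by
    intro i hi
    have hfne : f i ≠ jℓ := by
      intro h
      exact hi (hfinj (h.trans hfiℓ.symm))
    have hmem : f i ∈ D.erase jℓ := Finset.mem_erase.mpr ⟨hfne, hfD i⟩
    refine le_antisymm ?_ ?_
    · calc (D.erase jℓ).inf' herase (C i) ≤ C i (f i) := Finset.inf'_le _ hmem
        _ = D.inf' hne (C i) :=
          (le_antisymm (Finset.inf'_le _ (hfD i)) (Finset.le_inf' _ _ (hfmin i))).symm
    · exact Finset.le_inf' _ _ fun j hj => Finset.inf'_le_of_le _ (hsub hj) le_rfl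
  -- the key strict inequality in row ir
  have hjsne : ∀ j ∈ D, jstar ≠ j := fun j hj h => hjs (h ▸ hj)
  have hlt : C ir jstar < C ir jr := by
    by_contra hcon
    push_neg at hcon
    have hgt : C ir jr < C ir jstar :=
      lt_of_le_of_ne hcon fun h => (hjsne jr hjrD) (hinj ir h.symm)
    -- then every row's min over D' is strictly below C i jstar, contradicting
    -- the ordinal basis property of D' at column jstar
    have hall : ∀ i : Fin n,
        (insert jstar (D.erase jℓ)).inf' (Finset.insert_nonempty _ _) (C i) < C i jstar := by
      intro i
      have h1 : (insert jstar (D.erase jℓ)).inf' (Finset.insert_nonempty _ _) (C i)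
          ≤ (D.erase jℓ).inf' herase (C i) :=
        Finset.le_inf' _ _ fun j hj =>
          Finset.inf'_le _ (Finset.mem_insert_of_mem hj)
      rcases eq_or_ne i ir with rfl | hi
      · exact lt_of_le_of_lt h1 (hEir ▸ hgt)
      · exact lt_of_le_of_lt h1 (hK i hi)
    obtain ⟨i, hi⟩ := hD'.2 jstar
    obtain ⟨b, hb, hbeq⟩ := Finset.exists_mem_eq_inf'
      (Finset.insert_nonempty jstar (D.erase jℓ)) (C i)
    have := hi b hb
    rw [← hbeq] at this
    exact absurd (lt_of_le_of_lt this (hall i)) (lt_irrefl _)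
  -- value of the new minimum in row ir
  have hU'ir : (insert jstar (D.erase jℓ)).inf' (Finset.insert_nonempty _ _) (C ir)
      = C ir jstar := by
    refine le_antisymm (Finset.inf'_le _ (Finset.mem_insert_self _ _)) ?_
    refine Finset.le_inf' _ _ fun j hj => ?_
    rcases Finset.mem_insert.mp hj with rfl | hj'
    · exact le_rfl
    · exact le_of_lt (lt_of_lt_of_le hlt (hir j (hsub hj')))
  refine ⟨?_, ?_, ?_⟩
  · -- row iℓ strictly increases
    rw [hUiℓ]
    refine (Finset.lt_inf'_iff _).mpr fun j hj => ?_
    rcases Finset.mem_insert.mp hj with rfl | hj'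
    · calc C iℓ jℓ < C iℓ jr := hnew
        _ = (D.erase jℓ).inf' herase (C iℓ) := hEiℓ.symm
        _ < C iℓ j := hK iℓ hiℓir
    · have hne' : jℓ ≠ j := fun h => (Finset.mem_erase.mp hj').1 (h ▸ rfl)
      exact lt_of_le_of_ne (hiℓ j (hsub hj')) fun h => hne' (hinj iℓ h)
  · rw [hU'ir, hUir]; exact hlt
  · intro i hiiℓ hiir
    refine le_antisymm ?_ ?_
    · calc (insert jstar (D.erase jℓ)).inf' _ (C i)
          ≤ (D.erase jℓ).inf' herase (C i) :=
            Finset.le_inf' _ _ fun j hj => Finset.inf'_le _ (Finset.mem_insert_of_mem hj)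
        _ = D.inf' hne (C i) := hsame i hiiℓ
    · rw [← hsame i hiiℓ]
      refine Finset.le_inf' _ _ fun j hj => ?_
      rcases Finset.mem_insert.mp hj with rfl | hj'
      · exact le_of_lt (hK i hiir)
      · exact Finset.inf'_le _ hj'
end

section
/- In the marriage model with k men and k women and complete strict preferences, there exist stable matchings μ_0 and μ_z such that μ_0 matches every man to his most preferred partner among all his stable partners, and μ_z matches every woman to her most preferred partner among all her stable partners. -/
open Finset Classical

/-- Stability of a (perfect) matching `μ` in a marriage instance with `k` men
and `k` women and complete strict preferences, given by injective rank
functions (lower rank = more preferred): no pair `(m, w)` blocks `μ`. -/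
def IsStableMatching (k : ℕ) (mpref wpref : Fin k → Fin k → ℕ)
    (μ : Fin k ≃ Fin k) : Prop :=
  ∀ m w : Fin k,
    ¬ (mpref m w < mpref m (μ m) ∧ wpref w m < wpref w (μ.symm w))

namespace GaleShapleyAux

variable {k : ℕ}

/-- The woman that man `m` proposes to, given the set `t` of women who have
rejected him so far: his most preferred woman not in `t` (if any). -/
noncomputable def propose (mpref : Fin k → Fin k → ℕ) (m : Fin k)
    (t : Finset (Fin k)) : Option (Fin k) :=
  if h : (univ \ t).Nonempty then
    some ((univ \ t).exists_min_image (mpref m) h).choose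
  else none

lemma propose_spec {mpref : Fin k → Fin k → ℕ} {m : Fin k} {t : Finset (Fin k)}
    {w : Fin k} (h : propose mpref m t = some w) :
    w ∉ t ∧ ∀ w', w' ∉ t → mpref m w ≤ mpref m w' := by
  unfold propose at h
  split_ifs at h with hne
  · obtain ⟨hmem, hmin⟩ := ((univ \ t).exists_min_image (mpref m) hne).choose_spec
    injection h with h'
    subst h'
    refine ⟨(mem_sdiff.mp hmem).2, fun w' hw' => hmin w' ?_⟩
    exact mem_sdiff.mpr ⟨mem_univ _, hw'⟩

lemma propose_isSome {mpref : Fin k → Fin k → ℕ} {m : Fin k} {t : Finset (Fin k)}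
    (h : (univ \ t).Nonempty) : ∃ w, propose mpref m t = some w := by
  unfold propose
  rw [dif_pos h]
  exact ⟨_, rfl⟩

lemma propose_none {mpref : Fin k → Fin k → ℕ} {m : Fin k} {t : Finset (Fin k)}
    (h : ¬ (univ \ t).Nonempty) : propose mpref m t = none := by
  unfold propose; rw [dif_neg h]

variable (mpref wpref : Fin k → Fin k → ℕ)

/-- Current proposal of man `m` in state `s` (rejection sets). -/
noncomputable def prop (s : Fin k → Finset (Fin k)) (m : Fin k) : Option (Fin k) :=
  propose mpref m (s m)

/-- One round of parallel deferred acceptance: every man proposes to his best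
not-yet-rejecting woman, and every woman rejects all current proposers except
her favorite one. -/
noncomputable def T (s : Fin k → Finset (Fin k)) (m : Fin k) : Finset (Fin k) :=
  s m ∪ univ.filter (fun w => prop mpref s m = some w ∧
    ∃ m', prop mpref s m' = some w ∧ wpref w m' < wpref w m)

lemma subset_T (s : Fin k → Finset (Fin k)) (m : Fin k) : s m ⊆ T mpref wpref s m :=
  subset_union_left

/-- The favorite current proposer of a proposed-to woman is not rejected,
hence still proposes to her after one more round. -/
lemma best_survives {s : Fin k → Finset (Fin k)} {w m₁ : Fin k}
    (h : prop mpref s m₁ = some w) :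
    ∃ m', prop mpref (T mpref wpref s) m' = some w ∧
      ∀ m'', prop mpref s m'' = some w → wpref w m' ≤ wpref w m'' := by
  classical
  set P : Finset (Fin k) := univ.filter (fun m' => prop mpref s m' = some w) with hP
  have hPne : P.Nonempty := ⟨m₁, by simp [hP, h]⟩
  obtain ⟨b, hbP, hbmin⟩ := P.exists_min_image (wpref w) hPne
  have hbprop : prop mpref s b = some w := (mem_filter.mp hbP).2
  have hTb : T mpref wpref s b = s b := by
    apply union_eq_left.mpr
    intro w' hw'
    exfalso
    obtain ⟨hpb, m', hm', hlt⟩ := (mem_filter.mp hw').2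
    have : w' = w := by rw [hbprop] at hpb; exact (Option.some.inj hpb).symm
    subst this
    exact absurd (hbmin m' (by simp [hP, hm'])) (not_le.mpr hlt)
  refine ⟨b, ?_, fun m'' hm'' => hbmin m'' (by simp [hP, hm''])⟩
  unfold prop
  rw [hTb]
  exact hbprop

/-- The key invariant: any woman who has rejected `m` has a current proposer
that she strictly prefers to `m`. -/
def Inv (s : Fin k → Finset (Fin k)) : Prop :=
  ∀ m w, w ∈ s m → ∃ m', prop mpref s m' = some w ∧ wpref w m' < wpref w m

lemma inv_T {s : Fin k → Finset (Fin k)} (hs : Inv mpref wpref s) :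
    Inv mpref wpref (T mpref wpref s) := by
  intro m w hw
  have key : (∃ m', prop mpref s m' = some w ∧ wpref w m' < wpref w m) →
      ∃ m', prop mpref (T mpref wpref s) m' = some w ∧ wpref w m' < wpref w m := by
    rintro ⟨m', hm', hlt⟩
    obtain ⟨b, hb, hbmin⟩ := best_survives mpref wpref hm'
    exact ⟨b, hb, lt_of_le_of_lt (hbmin m' hm') hlt⟩
  rcases mem_union.mp hw with h | h
  · exact key (hs m w h)
  · obtain ⟨-, m', hm', hlt⟩ := (mem_filter.mp h).2
    exact key ⟨m', hm', hlt⟩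

noncomputable def measure (s : Fin k → Finset (Fin k)) : ℕ :=
  ∑ m : Fin k, (s m).card

lemma measure_lt {s : Fin k → Finset (Fin k)}
    (h : T mpref wpref s ≠ s) : measure s < measure (T mpref wpref s) := by
  have hne : ∃ m, s m ≠ T mpref wpref s m := by
    by_contra hc
    push_neg at hc
    exact h (funext fun m => (hc m).symm)
  obtain ⟨m, hm⟩ := hne
  refine Finset.sum_lt_sum (fun i _ => card_le_card (subset_T mpref wpref s i)) ⟨m, mem_univ m, ?_⟩
  exact card_lt_card (ssubset_of_ne_of_subset hm (subset_T mpref wpref s m))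

lemma measure_le (s : Fin k → Finset (Fin k)) : measure s ≤ k * k := by
  calc measure s ≤ ∑ _m : Fin k, k :=
        Finset.sum_le_sum (fun i _ => by
          simpa using card_le_card (subset_univ (s i)))
    _ = k * k := by simp [mul_comm]

/-- A fixed point of `T` satisfying the invariant exists. -/
lemma exists_fixed : ∃ s : Fin k → Finset (Fin k),
    T mpref wpref s = s ∧ Inv mpref wpref s := by
  classical
  set s0 : Fin k → Finset (Fin k) := fun _ => ∅ with hs0
  have hinv : ∀ n, Inv mpref wpref ((T mpref wpref)^[n] s0) := by
    intro n
    induction n with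
    | zero => intro m w hw; simp [hs0] at hw
    | succ n ih =>
        rw [Function.iterate_succ_apply']
        exact inv_T mpref wpref ih
  have key : ∀ n, (T mpref wpref ((T mpref wpref)^[n] s0) = (T mpref wpref)^[n] s0)
      ∨ n ≤ measure ((T mpref wpref)^[n] s0) := by
    intro n
    induction n with
    | zero => exact Or.inr (Nat.zero_le _)
    | succ n ih =>
        rcases ih with hfix | hle
        · left
          rw [Function.iterate_succ_apply', hfix, hfix]
        · by_cases hfix : T mpref wpref ((T mpref wpref)^[n] s0) = (T mpref wpref)^[n] s0
          · left
            rw [Function.iterate_succ_apply', hfix, hfix]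
          · right
            rw [Function.iterate_succ_apply']
            exact Nat.succ_le_of_lt (lt_of_le_of_lt hle (measure_lt mpref wpref hfix))
  rcases key (k * k + 1) with hfix | hle
  · exact ⟨_, hfix, hinv _⟩
  · exact absurd (le_trans hle (measure_le _)) (by omega)

/-- Existence of a stable matching, extracted from a fixed point of `T`. -/
theorem exists_stable (hm : ∀ m, Function.Injective (mpref m))
    (hw : ∀ w, Function.Injective (wpref w)) :
    ∃ μ : Fin k ≃ Fin k, IsStableMatching k mpref wpref μ := by
  classical
  obtain ⟨s, hfix, hinv⟩ := exists_fixed mpref wpref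
  -- every man still has an acceptable woman
  have hne : ∀ m, (univ \ s m).Nonempty := by
    intro m
    by_contra hc
    have hall : ∀ w : Fin k, w ∈ s m := by
      intro w
      by_contra hwm
      exact hc ⟨w, mem_sdiff.mpr ⟨mem_univ w, hwm⟩⟩
    have hprop : ∀ w : Fin k, ∃ m', prop mpref s m' = some w :=
      fun w => ⟨(hinv m w (hall w)).choose, (hinv m w (hall w)).choose_spec.1⟩
    choose f hf using hprop
    have hfinj : Function.Injective f := by
      intro w w' hww
      have := hf w
      rw [hww, hf w'] at this
      exact (Option.some.inj this).symm
    obtain ⟨w, hwf⟩ := Finite.surjective_of_injective hfinj m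
    have : prop mpref s m = some w := by rw [← hwf]; exact hf w
    rw [prop, propose_none hc] at this
    exact absurd this (by simp)
  have hsome : ∀ m, ∃ w, prop mpref s m = some w :=
    fun m => propose_isSome (hne m)
  choose μf hμf using hsome
  have hspec : ∀ m, μf m ∉ s m ∧ ∀ w', w' ∉ s m → mpref m (μf m) ≤ mpref m w' :=
    fun m => propose_spec (hμf m)
  -- at a fixed point each woman has at most one proposer
  have hinj : Function.Injective μf := by
    intro m m' hmm
    by_contra hne'
    have h2 : prop mpref s m' = some (μf m) := by rw [hmm]; exact hμf m'
    have h1 : prop mpref s m = some (μf m) := hμf m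
    set w := μf m with hwdef
    -- whichever of m, m' is worse for w gets rejected, contradicting fixedness
    have hrej : ∀ a b : Fin k, prop mpref s a = some w → prop mpref s b = some w →
        wpref w a < wpref w b → False := by
      intro a b ha hb hab
      have hwmem : w ∈ T mpref wpref s b :=
        mem_union_right _ (mem_filter.mpr ⟨mem_univ w, hb, a, ha, hab⟩)
      rw [hfix] at hwmem
      exact (propose_spec hb).1 hwmem
    rcases lt_trichotomy (wpref w m) (wpref w m') with h | h | h
    · exact hrej m m' h1 h2 h
    · exact hne' (hw w h)
    · exact hrej m' m h2 h1 h
  have hbij : Function.Bijective μf := ⟨hinj, Finite.surjective_of_injective hinj⟩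
  refine ⟨Equiv.ofBijective μf hbij, ?_⟩
  intro m w ⟨hb1, hb2⟩
  simp only [Equiv.ofBijective_apply] at hb1
  -- w must have rejected m
  have hwm : w ∈ s m := by
    by_contra hws
    exact absurd ((hspec m).2 w hws) (not_le.mpr hb1)
  obtain ⟨m', hm', hlt⟩ := hinv m w hwm
  have hμm' : μf m' = w := by
    have := hμf m'
    rw [hm'] at this
    exact (Option.some.inj this).symm
  have hsymm : (Equiv.ofBijective μf hbij).symm w = m' := by
    rw [Equiv.symm_apply_eq, Equiv.ofBijective_apply, hμm']
  rw [hsymm] at hb2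
  exact absurd hb2 (not_lt.mpr (le_of_lt hlt))

/-- Men-pointwise better choice between two matchings. -/
noncomputable def joinf (μ ν : Fin k ≃ Fin k) (m : Fin k) : Fin k :=
  if mpref m (μ m) ≤ mpref m (ν m) then μ m else ν m

lemma joinf_le_left (μ ν : Fin k ≃ Fin k) (m : Fin k) :
    mpref m (joinf mpref μ ν m) ≤ mpref m (μ m) := by
  unfold joinf; split_ifs with h
  · exact le_rfl
  · exact le_of_lt (not_le.mp h)

lemma joinf_le_right (μ ν : Fin k ≃ Fin k) (m : Fin k) :
    mpref m (joinf mpref μ ν m) ≤ mpref m (ν m) := by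
  unfold joinf; split_ifs with h
  · exact h
  · exact le_rfl

section Join

variable (hm : ∀ m, Function.Injective (mpref m))
  (hw : ∀ w, Function.Injective (wpref w))
  {μ ν : Fin k ≃ Fin k}
  (hμ : IsStableMatching k mpref wpref μ)
  (hν : IsStableMatching k mpref wpref ν)

include hm hw hμ hν

lemma joinf_aux {m m' w : Fin k} (h1 : μ m = w) (h2 : ν m' = w)
    (h3 : mpref m (μ m) ≤ mpref m (ν m))
    (h4 : mpref m' (ν m') < mpref m' (μ m')) (hne : m ≠ m') : False := by
  have hμs : μ.symm w = m := by rw [Equiv.symm_apply_eq, h1]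
  have hνs : ν.symm w = m' := by rw [Equiv.symm_apply_eq, h2]
  rcases lt_trichotomy (wpref w m) (wpref w m') with h | h | h
  · -- (m, w) blocks ν
    refine hν m w ⟨?_, ?_⟩
    · rw [← h1]
      rcases lt_or_eq_of_le h3 with h' | h'
      · exact h'
      · exfalso
        have : μ m = ν m := hm m h'
        have : ν m = ν m' := by rw [← this, h1, h2]
        exact hne (ν.injective this)
    · rw [hνs]; exact h
  · exact hne (hw w h)
  · -- (m', w) blocks μ
    refine hμ m' w ⟨?_, ?_⟩
    · rw [← h2]; exact h4
    · rw [hμs]; exact h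
  
lemma joinf_inj : Function.Injective (joinf mpref μ ν) := by
  intro m m' h
  by_contra hne
  unfold joinf at h
  split_ifs at h with c1 c2 c2
  · exact hne (μ.injective h)
  · exact joinf_aux mpref wpref hm hw hμ hν h (rfl) c1 (not_le.mp c2) hne
  · exact joinf_aux mpref wpref hm hw hμ hν h.symm (rfl) c2 (not_le.mp c1) (fun e => hne e.symm)
  · exact hne (ν.injective h)

/-- The join of two stable matchings (each man gets the better of his two
partners) is a stable matching. -/
lemma join_stable :
    ∃ lam : Fin k ≃ Fin k, IsStableMatching k mpref wpref lam ∧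
      ∀ m, lam m = joinf mpref μ ν m := by
  have hbij : Function.Bijective (joinf mpref μ ν) :=
    ⟨joinf_inj mpref wpref hm hw hμ hν,
     Finite.surjective_of_injective (joinf_inj mpref wpref hm hw hμ hν)⟩
  refine ⟨Equiv.ofBijective _ hbij, ?_, fun m => rfl⟩
  intro m w ⟨hb1, hb2⟩
  simp only [Equiv.ofBijective_apply] at hb1
  set lam := Equiv.ofBijective _ hbij with hlam
  set m₀ := lam.symm w with hm₀
  have hlm₀ : joinf mpref μ ν m₀ = w := by
    have : lam m₀ = w := by rw [hm₀, Equiv.apply_symm_apply]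
    simpa [hlam, Equiv.ofBijective_apply] using this
  rw [hm₀] at hb2
  unfold joinf at hlm₀
  split_ifs at hlm₀ with hc
  · -- w is m₀'s μ-partner: (m, w) blocks μ
    have hμs : μ.symm w = m₀ := by rw [Equiv.symm_apply_eq, hlm₀]
    refine hμ m w ⟨lt_of_lt_of_le hb1 (joinf_le_left mpref μ ν m), ?_⟩
    rw [hμs]; exact hb2
  · have hνs : ν.symm w = m₀ := by rw [Equiv.symm_apply_eq, hlm₀]
    refine hν m w ⟨lt_of_lt_of_le hb1 (joinf_le_right mpref μ ν m), ?_⟩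
    rw [hνs]; exact hb2

end Join

/-- Existence of a man-optimal stable matching. -/
theorem exists_man_optimal (hm : ∀ m, Function.Injective (mpref m))
    (hw : ∀ w, Function.Injective (wpref w)) :
    ∃ μ0 : Fin k ≃ Fin k, IsStableMatching k mpref wpref μ0 ∧
      ∀ m : Fin k, ∀ μ : Fin k ≃ Fin k, IsStableMatching k mpref wpref μ →
        mpref m (μ0 m) ≤ mpref m (μ m) := by
  classical
  set S : Finset (Fin k ≃ Fin k) :=
    univ.filter (fun μ => IsStableMatching k mpref wpref μ) with hS
  have hSne : S.Nonempty := by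
    obtain ⟨μ, hμ⟩ := exists_stable mpref wpref hm hw
    exact ⟨μ, by simp [hS, hμ]⟩
  obtain ⟨μ0, hμ0S, hμ0min⟩ :=
    S.exists_min_image (fun μ => ∑ m : Fin k, mpref m (μ m)) hSne
  have hμ0 : IsStableMatching k mpref wpref μ0 := (mem_filter.mp hμ0S).2
  refine ⟨μ0, hμ0, ?_⟩
  intro m μ hμ
  obtain ⟨lam, hlam, hlamf⟩ := join_stable mpref wpref hm hw hμ0 hμ
  have hle : ∀ m', mpref m' (lam m') ≤ mpref m' (μ0 m') := by
    intro m'; rw [hlamf m']; exact joinf_le_left mpref μ0 μ m'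
  have hsum : ∑ m' : Fin k, mpref m' (μ0 m') ≤ ∑ m' : Fin k, mpref m' (lam m') :=
    hμ0min lam (by simp [hS, hlam])
  have heq : mpref m (lam m) = mpref m (μ0 m) := by
    by_contra hne
    have hlt : mpref m (lam m) < mpref m (μ0 m) := lt_of_le_of_ne (hle m) hne
    have : ∑ m' : Fin k, mpref m' (lam m') < ∑ m' : Fin k, mpref m' (μ0 m') :=
      Finset.sum_lt_sum (fun i _ => hle i) ⟨m, mem_univ m, hlt⟩
    omega
  calc mpref m (μ0 m) = mpref m (lam m) := heq.symm
    _ ≤ mpref m (μ m) := by rw [hlamf m]; exact joinf_le_right mpref μ0 μ m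

/-- Swapping the two sides of the market turns a stable matching into a
stable matching of the swapped instance. -/
lemma stable_symm {μ : Fin k ≃ Fin k}
    (h : IsStableMatching k mpref wpref μ) :
    IsStableMatching k wpref mpref μ.symm := by
  intro w m hc
  refine h m w ⟨?_, ?_⟩
  · have := hc.2
    rwa [Equiv.symm_symm] at this
  · exact hc.1

end GaleShapleyAux

/-- There exist a man-optimal stable matching `μ0` and a woman-optimal stable
matching `μz`: `μ0` gives every man his most preferred partner among all his
stable partners, and `μz` gives every woman her most preferred partner among
all her stable partners. -/
theorem exists_man_and_woman_optimal_stable_matchings (k : ℕ)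
    (mpref wpref : Fin k → Fin k → ℕ)
    (hm : ∀ m, Function.Injective (mpref m))
    (hw : ∀ w, Function.Injective (wpref w)) :
    ∃ μ0 μz : Fin k ≃ Fin k,
      IsStableMatching k mpref wpref μ0 ∧
      IsStableMatching k mpref wpref μz ∧
      (∀ m : Fin k, ∀ μ : Fin k ≃ Fin k, IsStableMatching k mpref wpref μ →
        mpref m (μ0 m) ≤ mpref m (μ m)) ∧
      (∀ w : Fin k, ∀ μ : Fin k ≃ Fin k, IsStableMatching k mpref wpref μ →
        wpref w (μz.symm w) ≤ wpref w (μ.symm w)) := by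
  obtain ⟨μ0, hμ0, hopt0⟩ := GaleShapleyAux.exists_man_optimal mpref wpref hm hw
  obtain ⟨ν, hν, hoptν⟩ := GaleShapleyAux.exists_man_optimal wpref mpref hw hm
  refine ⟨μ0, ν.symm, hμ0, ?_, hopt0, ?_⟩
  · exact GaleShapleyAux.stable_symm wpref mpref hν
  · intro w μ hμ
    have := hoptν w μ.symm (GaleShapleyAux.stable_symm mpref wpref hμ)
    rwa [Equiv.symm_symm]
end

section
/- For every even k ≥ 4 divisible by 2, the marriage instance on men m_0,…,m_{k-1} and women w_0,…,w_{k-1} in which man m_i's preference list is w_i ≻ w_{i+1} ≻ w_{i+k/2+1} ≻ w_{i+k/2+2} (indices mod k) and woman w_j ranks man m_i in position 5−ℓ whenever m_i ranks w_j in position ℓ, has at least 2^{k/2} stable matchings. -/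
/-- Rank (position, 1–4) of woman `w` on man `i`'s list in the instance
`m_i : w_i ≻ w_{i+1} ≻ w_{i+k/2+1} ≻ w_{i+k/2+2}` (indices mod `k`);
`0` means unacceptable. -/
def mrank (k : ℕ) (i w : ZMod k) : ℕ :=
  if w = i then 1
  else if w = i + 1 then 2
  else if w = i + (k / 2 : ℕ) + 1 then 3
  else if w = i + (k / 2 : ℕ) + 2 then 4
  else 0

/-- Rank of man `m` on woman `j`'s list: position `5 − ℓ` when `m` ranks `j`
in position `ℓ`; `0` means unacceptable. -/
def wrank (k : ℕ) (j m : ZMod k) : ℕ :=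
  if mrank k m j = 0 then 0 else 5 - mrank k m j

/-- `μ` is a matching: a set of disjoint acceptable man–woman pairs. -/
def IsMatchingF (k : ℕ) (μ : Finset (ZMod k × ZMod k)) : Prop :=
  (∀ p ∈ μ, mrank k p.1 p.2 ≠ 0) ∧
  (∀ p ∈ μ, ∀ q ∈ μ, p.1 = q.1 → p = q) ∧
  (∀ p ∈ μ, ∀ q ∈ μ, p.2 = q.2 → p = q)

/-- `(i, j)` is a blocking pair for `μ`: the pair is acceptable, `i` strictly
prefers `j` to his partner (or is unmatched), and `j` strictly prefers `i` to
her partner (or is unmatched). -/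
def BlocksF (k : ℕ) (μ : Finset (ZMod k × ZMod k)) (i j : ZMod k) : Prop :=
  mrank k i j ≠ 0 ∧
  (∀ p ∈ μ, p.1 = i → mrank k i j < mrank k i p.2) ∧
  (∀ p ∈ μ, p.2 = j → wrank k j i < wrank k j p.1)

/-- Stability: a matching with no blocking pair. -/
def IsStableF (k : ℕ) (μ : Finset (ZMod k × ZMod k)) : Prop :=
  IsMatchingF k μ ∧ ∀ i j : ZMod k, ¬ BlocksF k μ i j

section Aux

variable {k n : ℕ}

/-- The partner of man `i`. -/
def Mman (k n : ℕ) (b : ZMod k → Bool) (i : ZMod k) : ZMod k :=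
  cond (b i) (i + (n + 1 : ℕ)) (i + 1)

/-- The matching associated to a choice function `b`. -/
def muB (k n : ℕ) [NeZero k] (b : ZMod k → Bool) : Finset (ZMod k × ZMod k) :=
  Finset.univ.image (fun i => (i, Mman k n b i))

lemma cast_ne (hk : k = 2 * n) (hn : 2 ≤ n) {a b : ℕ} (ha : a < k) (hb : b < k)
    (hab : a ≠ b) : (a : ZMod k) ≠ (b : ZMod k) := by
  intro h
  apply hab
  have h2 := congrArg ZMod.val h
  rwa [ZMod.val_cast_of_lt ha, ZMod.val_cast_of_lt hb] at h2

lemma one_ne (hk : k = 2 * n) (hn : 2 ≤ n) : (1 : ZMod k) ≠ 0 := by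
  have := cast_ne hk hn (a := 1) (b := 0) (by omega) (by omega) (by omega)
  simpa using this

lemma n1_ne_zero (hk : k = 2 * n) (hn : 2 ≤ n) : ((n + 1 : ℕ) : ZMod k) ≠ 0 := by
  have := cast_ne hk hn (a := n + 1) (b := 0) (by omega) (by omega) (by omega)
  simpa using this

lemma n1_ne_one (hk : k = 2 * n) (hn : 2 ≤ n) : ((n + 1 : ℕ) : ZMod k) ≠ 1 := by
  have := cast_ne hk hn (a := n + 1) (b := 1) (by omega) (by omega) (by omega)
  simpa using this

lemma kdiv : k = 2 * n → k / 2 = n := by omega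

lemma two_n_zero (hk : k = 2 * n) : ((2 * n : ℕ) : ZMod k) = 0 := by
  rw [← hk]; exact ZMod.natCast_self k

lemma mrank_self (i : ZMod k) : mrank k i i = 1 := by
  unfold mrank; rw [if_pos rfl]

lemma mrank_add_one (hk : k = 2 * n) (hn : 2 ≤ n) (i : ZMod k) :
    mrank k i (i + 1) = 2 := by
  unfold mrank
  rw [if_neg, if_pos rfl]
  intro h
  exact one_ne hk hn (by linear_combination h)

lemma mrank_add_n1 (hk : k = 2 * n) (hn : 2 ≤ n) (i : ZMod k) :
    mrank k i (i + (n + 1 : ℕ)) = 3 := by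
  unfold mrank
  rw [if_neg, if_neg, if_pos]
  · rw [kdiv hk]; push_cast; ring
  · intro h
    exact n1_ne_one hk hn (by linear_combination h)
  · intro h
    exact n1_ne_zero hk hn (by linear_combination h)

lemma mrank_eq_one (i j : ZMod k) (h : mrank k i j = 1) : j = i := by
  unfold mrank at h
  split_ifs at h with h1 h2 h3 h4 <;> first | exact h1 | omega

lemma mrank_eq_two (i j : ZMod k) (h : mrank k i j = 2) : j = i + 1 := by
  unfold mrank at h
  split_ifs at h with h1 h2 h3 h4 <;> first | exact h2 | omega

lemma Mman_inj (hk : k = 2 * n) (hn : 2 ≤ n) (b : ZMod k → Bool)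
    (hb : ∀ i, b (i + (n : ℕ)) = b i) : Function.Injective (Mman k n b) := by
  intro x y h
  unfold Mman at h
  have key : ∀ u v : ZMod k, b u = true → b v = false →
      u + (n + 1 : ℕ) ≠ v + 1 := by
    intro u v hu hv heq
    have hvu : v = u + (n : ℕ) := by push_cast at heq ⊢; linear_combination -heq
    rw [hvu, hb u, hu] at hv
    simp at hv
  rcases hx : b x <;> rcases hy : b y <;>
    rw [hx, hy] at h <;> simp only [Bool.cond_false, Bool.cond_true] at h
  · exact add_right_cancel h
  · exact absurd h.symm (key y x hy hx)
  · exact absurd h (key x y hx hy)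
  · exact add_right_cancel h

lemma mem_muB [NeZero k] (b : ZMod k → Bool) (p : ZMod k × ZMod k) :
    p ∈ muB k n b ↔ p = (p.1, Mman k n b p.1) := by
  constructor
  · intro h
    simp only [muB, Finset.mem_image, Finset.mem_univ, true_and] at h
    obtain ⟨i, hi⟩ := h
    rw [← hi]
  · intro h
    rw [h]
    simp only [muB, Finset.mem_image, Finset.mem_univ, true_and]
    exact ⟨p.1, rfl⟩

/-- Woman `j`'s partner in `muB`. -/
lemma woman_partner [NeZero k] (hk : k = 2 * n) (hn : 2 ≤ n) (b : ZMod k → Bool)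
    (hb : ∀ i, b (i + (n : ℕ)) = b i) (j : ZMod k) :
    ∃ m : ZMod k, (m, j) ∈ muB k n b ∧
      wrank k j m = (if b (j - 1) then 2 else 3) := by
  rcases hbj : b (j - 1) with _ | _
  · refine ⟨j - 1, ?_, ?_⟩
    · rw [mem_muB]
      simp only [Mman, hbj, Bool.cond_false]
      rw [sub_add_cancel]
    · have h1 : mrank k (j - 1) j = 2 := by
        have := mrank_add_one hk hn (j - 1)
        rwa [sub_add_cancel] at this
      simp [wrank, h1]
  · refine ⟨j - 1 + (n : ℕ), ?_, ?_⟩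
    · rw [mem_muB]
      have hb2 : b (j - 1 + (n : ℕ)) = true := by rw [hb, hbj]
      simp only [Mman, hb2, Bool.cond_true]
      have h2 : (j - 1 + (n : ℕ)) + ((n + 1 : ℕ) : ZMod k) = j := by
        push_cast
        rw [show j - 1 + (n : ℕ) + ((n : ℕ) + 1) = j + ((2 * n : ℕ) : ZMod k) by
          push_cast; ring, two_n_zero hk, add_zero]
      exact Prod.ext rfl h2.symm
    · have he : (j - 1 + (n : ℕ)) + ((n + 1 : ℕ) : ZMod k) = j := by
        push_cast
        rw [show j - 1 + (n : ℕ) + ((n : ℕ) + 1) = j + ((2 * n : ℕ) : ZMod k) by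
          push_cast; ring, two_n_zero hk, add_zero]
      have h1 : mrank k (j - 1 + (n : ℕ)) j = 3 := by
        have := mrank_add_n1 hk hn (j - 1 + (n : ℕ))
        rwa [he] at this
      simp [wrank, h1]

lemma muB_stable [NeZero k] (hk : k = 2 * n) (hn : 2 ≤ n) (b : ZMod k → Bool)
    (hb : ∀ i, b (i + (n : ℕ)) = b i) : IsStableF k (muB k n b) := by
  constructor
  · refine ⟨?_, ?_, ?_⟩
    · intro p hp
      rw [mem_muB] at hp
      rw [hp]
      simp only [Mman]
      rcases hbp : b p.1 <;> simp only [hbp, Bool.cond_false, Bool.cond_true]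
      · rw [mrank_add_one hk hn]; omega
      · rw [mrank_add_n1 hk hn]; omega
    · intro p hp q hq h
      rw [mem_muB] at hp hq
      rw [hp, hq, h]
    · intro p hp q hq h
      rw [mem_muB] at hp hq
      have h1 : p.2 = Mman k n b p.1 := congrArg Prod.snd hp
      have h2 : q.2 = Mman k n b q.1 := congrArg Prod.snd hq
      have : p.1 = q.1 := by
        apply Mman_inj hk hn b hb
        rw [← h1, ← h2, h]
      rw [hp, hq, this]
  · rintro i j ⟨hacc, h2, h3⟩
    have hmem : (i, Mman k n b i) ∈ muB k n b := by rw [mem_muB]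
    have hlt := h2 _ hmem rfl
    obtain ⟨m, hm, hwm⟩ := woman_partner hk hn b hb j
    have h3' := h3 _ hm rfl
    simp only at h3'
    rcases hbi : b i
    · -- man i has his 2nd choice i+1 : mrank i j = 1, so j = i
      simp only [Mman, hbi, Bool.cond_false] at hlt
      rw [mrank_add_one hk hn] at hlt
      have hj1 : mrank k i j = 1 := by omega
      have hj : j = i := mrank_eq_one i j hj1
      have hw4 : wrank k j i = 4 := by
        rw [hj]; simp [wrank, mrank_self]
      rw [hw4, hwm] at h3'
      split_ifs at h3' <;> omega
    · -- man i has his 3rd choice : mrank i j ∈ {1,2}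
      simp only [Mman, hbi, Bool.cond_true] at hlt
      rw [mrank_add_n1 hk hn] at hlt
      have hj12 : mrank k i j = 1 ∨ mrank k i j = 2 := by omega
      rcases hj12 with hj1 | hj2
      · have hj : j = i := mrank_eq_one i j hj1
        have hw4 : wrank k j i = 4 := by
          rw [hj]; simp [wrank, mrank_self]
        rw [hw4, hwm] at h3'
        split_ifs at h3' <;> omega
      · have hj : j = i + 1 := mrank_eq_two i j hj2
        have hw3 : wrank k j i = 3 := by
          rw [hj]; simp [wrank, mrank_add_one hk hn]
        have hbj : b (j - 1) = true := by
          rw [hj, add_sub_cancel_right, hbi]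
        rw [hw3, hwm, hbj] at h3'
        simp at h3'

end Aux

/-- For every even `k ≥ 4`, the instance above has at least `2^(k/2)` stable
matchings. -/
theorem many_stable_matchings (k : ℕ) (hk : 4 ≤ k) (hev : Even k) :
    2 ^ (k / 2) ≤
      Set.ncard {μ : Finset (ZMod k × ZMod k) | IsStableF k μ} := by
  haveI : NeZero k := ⟨by omega⟩
  set n := k / 2 with hn_def
  have hk2 : k = 2 * n := by
    obtain ⟨m, hm⟩ := hev; omega
  have hn : 2 ≤ n := by omega
  have hnpos : 0 < n := by omega
  -- choice function from t : Fin n → Bool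
  set bfun : (Fin n → Bool) → ZMod k → Bool :=
    fun t i => t ⟨i.val % n, Nat.mod_lt _ hnpos⟩ with hbfun
  have hbsym : ∀ t : Fin n → Bool, ∀ i : ZMod k, bfun t (i + (n : ℕ)) = bfun t i := by
    intro t i
    simp only [hbfun]
    congr 1
    apply Fin.ext
    simp only
    rw [ZMod.val_add, ZMod.val_cast_of_lt (by omega : n < k),
      Nat.mod_mod_of_dvd _ (⟨2, by omega⟩ : n ∣ k), Nat.add_mod_right]
  set F : (Fin n → Bool) → Finset (ZMod k × ZMod k) := fun t => muB k n (bfun t) with hF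
  have hFmem : ∀ t, F t ∈ {μ : Finset (ZMod k × ZMod k) | IsStableF k μ} := by
    intro t
    exact muB_stable hk2 hn (bfun t) (hbsym t)
  have hFinj : Function.Injective F := by
    intro t t' h
    by_contra hne
    obtain ⟨j0, hj0⟩ := Function.ne_iff.mp hne
    set i0 : ZMod k := ((j0 : ℕ) : ZMod k) with hi0
    have hval : (i0.val % n) = j0 := by
      rw [hi0, ZMod.val_cast_of_lt (by omega : (j0 : ℕ) < k),
        Nat.mod_eq_of_lt j0.isLt]
    have hb1 : bfun t i0 = t j0 := by
      simp only [hbfun]; congr 1; exact Fin.ext hval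
    have hb2 : bfun t' i0 = t' j0 := by
      simp only [hbfun]; congr 1; exact Fin.ext hval
    have hM : Mman k n (bfun t) i0 ≠ Mman k n (bfun t') i0 := by
      unfold Mman
      rw [hb1, hb2]
      rcases ht : t j0 <;> rcases ht' : t' j0 <;>
        simp only [Bool.cond_false, Bool.cond_true]
      · rw [ht, ht'] at hj0; exact absurd rfl hj0
      · intro he
        exact n1_ne_one hk2 hn (by linear_combination -he)
      · intro he
        exact n1_ne_one hk2 hn (by linear_combination he)
      · rw [ht, ht'] at hj0; exact absurd rfl hj0
    apply hM
    have hmem1 : (i0, Mman k n (bfun t) i0) ∈ F t := by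
      rw [hF]; rw [mem_muB]
    rw [h] at hmem1
    rw [hF, mem_muB] at hmem1
    exact congrArg Prod.snd hmem1
  -- counting
  have hsub : Set.range F ⊆ {μ : Finset (ZMod k × ZMod k) | IsStableF k μ} := by
    rintro _ ⟨t, rfl⟩; exact hFmem t
  have h1 : (Set.range F).ncard = 2 ^ n := by
    rw [Set.ncard_eq_toFinset_card', Set.toFinset_range,
      Finset.card_image_of_injective _ hFinj]
    simp
  calc 2 ^ n = (Set.range F).ncard := h1.symm
    _ ≤ _ := Set.ncard_le_ncard hsub (Set.toFinite _)
end

section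
/- Let μ be a stable matching of a marriage instance and let ρ be a rotation exposed at μ. Then μ Δ E_ρ (the symmetric difference of μ with the edge set of ρ) is a stable matching, and every man is matched in μ Δ E_ρ to a partner he weakly disprefers (relative to his partner in μ). -/
/-- Stability of a perfect matching in a marriage instance with complete strict
preferences given by injective rank functions (lower rank = more preferred). -/
def StableR (p : ℕ) (mr wr : Fin p → Fin p → ℕ) (μ : Fin p ≃ Fin p) : Prop :=
  ∀ m w : Fin p, ¬ (mr m w < mr m (μ m) ∧ wr w m < wr w (μ.symm w))

/-- Elimination of a rotation: if `ρ`, given by the cyclically indexed distinct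
men `ms 0, ms 1, …, ms (ℓ-1)` together with their `μ`-partners, is a rotation
exposed at the stable matching `μ` (each `μ (ms (j+1))` is the first woman
after `μ (ms j)` on `ms j`'s list who strictly prefers `ms j` to her
`μ`-partner), then the symmetric difference `μ Δ E_ρ` — the matching `μ'`
sending each `ms j` to `μ (ms (j+1))` and fixing everybody else — is a stable
matching, and every man weakly disprefers his partner in `μ'` to his partner
in `μ`. -/
theorem rotation_elimination_stable (p ℓ : ℕ) (hℓ : 2 ≤ ℓ)
    (mr wr : Fin p → Fin p → ℕ)
    (hm : ∀ m, Function.Injective (mr m))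
    (hw : ∀ w, Function.Injective (wr w))
    (μ : Fin p ≃ Fin p) (hμ : StableR p mr wr μ)
    (ms : ZMod ℓ → Fin p) (hms : Function.Injective ms)
    (hrot : ∀ j : ZMod ℓ,
      -- `ms j` prefers his current partner to the next woman on the cycle:
      mr (ms j) (μ (ms j)) < mr (ms j) (μ (ms (j + 1))) ∧
      -- the next woman strictly prefers `ms j` to her `μ`-partner:
      wr (μ (ms (j + 1))) (ms j) < wr (μ (ms (j + 1))) (ms (j + 1)) ∧
      -- and she is the *first* such woman after `μ (ms j)` on `ms j`'s list:
      ∀ w : Fin p, mr (ms j) (μ (ms j)) < mr (ms j) w →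
        mr (ms j) w < mr (ms j) (μ (ms (j + 1))) →
        ¬ (wr w (ms j) < wr w (μ.symm w))) :
    ∃ μ' : Fin p ≃ Fin p,
      (∀ j : ZMod ℓ, μ' (ms j) = μ (ms (j + 1))) ∧
      (∀ m : Fin p, (∀ j : ZMod ℓ, m ≠ ms j) → μ' m = μ m) ∧
      StableR p mr wr μ' ∧
      ∀ m : Fin p, mr m (μ m) ≤ mr m (μ' m) := by
  haveI : NeZero ℓ := ⟨by omega⟩
  set σ : Equiv.Perm (Fin p) :=
    (Equiv.addRight (1 : ZMod ℓ)).viaFintypeEmbedding ⟨ms, hms⟩ with hσ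
  set μ' : Fin p ≃ Fin p := σ.trans μ with hμ'
  have hA : ∀ j : ZMod ℓ, μ' (ms j) = μ (ms (j + 1)) := by
    intro j
    have : σ (ms j) = ms (j + 1) :=
      Equiv.Perm.viaFintypeEmbedding_apply_image (Equiv.addRight (1 : ZMod ℓ)) ⟨ms, hms⟩ j
    simp [hμ', Equiv.trans_apply, this]
  have hB : ∀ m : Fin p, (∀ j : ZMod ℓ, m ≠ ms j) → μ' m = μ m := by
    intro m hmne
    have hr : m ∉ Set.range (⟨ms, hms⟩ : ZMod ℓ ↪ Fin p) := by
      rintro ⟨j, rfl⟩; exact hmne j rfl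
    have : σ m = m := Equiv.Perm.viaFintypeEmbedding_apply_notMem_range _ _ hr
    simp [hμ', Equiv.trans_apply, this]
  have hC : ∀ j : ZMod ℓ, μ'.symm (μ (ms (j + 1))) = ms j := by
    intro j; rw [← hA j, Equiv.symm_apply_apply]
  -- women weakly improve
  have hwomen : ∀ w : Fin p, wr w (μ'.symm w) ≤ wr w (μ.symm w) := by
    intro w
    by_cases hcyc : ∃ k : ZMod ℓ, μ.symm w = ms k
    · obtain ⟨k, hk⟩ := hcyc
      have hw' : w = μ (ms ((k - 1) + 1)) := by
        rw [sub_add_cancel, ← hk, Equiv.apply_symm_apply]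
      rw [hw', hC (k - 1), Equiv.symm_apply_apply]
      exact (hrot (k - 1)).2.1.le
    · push_neg at hcyc
      have : μ' (μ.symm w) = w := by
        rw [hB _ (fun j hj => hcyc j hj), Equiv.apply_symm_apply]
      rw [show μ'.symm w = μ.symm w from (Equiv.symm_apply_eq μ').mpr this.symm]
  refine ⟨μ', hA, hB, ?_, ?_⟩
  · intro m w ⟨h1, h2⟩
    have h2' : wr w m < wr w (μ.symm w) := lt_of_lt_of_le h2 (hwomen w)
    by_cases hcyc : ∃ j : ZMod ℓ, m = ms j
    · obtain ⟨j, rfl⟩ := hcyc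
      rw [hA j] at h1
      rcases lt_trichotomy (mr (ms j) w) (mr (ms j) (μ (ms j))) with hlt | heq | hgt
      · exact hμ (ms j) w ⟨hlt, h2'⟩
      · have hwμ : w = μ (ms j) := hm (ms j) heq
        subst hwμ
        have hj : μ (ms j) = μ (ms ((j - 1) + 1)) := by rw [sub_add_cancel]
        have hsymm : μ'.symm (μ (ms j)) = ms (j - 1) := by rw [hj]; exact hC (j - 1)
        rw [hsymm] at h2
        have := (hrot (j - 1)).2.1
        rw [sub_add_cancel] at this
        exact absurd (h2.trans this) (lt_irrefl _)
      · exact (hrot j).2.2 w hgt h1 h2'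
    · push_neg at hcyc
      rw [hB _ hcyc] at h1
      exact hμ m w ⟨h1, h2'⟩
  · intro m
    by_cases hcyc : ∃ j : ZMod ℓ, m = ms j
    · obtain ⟨j, rfl⟩ := hcyc
      rw [hA j]; exact (hrot j).1.le
    · push_neg at hcyc
      rw [hB _ hcyc]
end

section
/- Let D be an almost-feasible ordinal basis for the marriage instance construction (D shares n−1 columns with a feasible basis B of the matching polytope, and the loop column of m_1 lies in B but not in D). Then the utility vector u of D satisfies u_i ∈ S ∪ M for every row i ≠ 1, where S = {0} and M = {1,…,k}; equivalently, for each agent v_i with i ≠ 1, the row minimum of C over the columns of D is attained at a column corresponding to an edge or loop incident to v_i. -/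
open Finset

/-- Vertices: `k` men (left) and `k` women (right). -/
abbrev MVert (k : ℕ) := Sum (Fin k) (Fin k)
/-- Columns: one loop per vertex, plus one valid edge per (man, woman) pair. -/
abbrev MCol (k : ℕ) := Sum (MVert k) (Fin k × Fin k)

/-- Incidence of a vertex with a column (loops are incident to their vertex). -/
def MInc {k : ℕ} (v : MVert k) (e : MCol k) : Prop :=
  match e with
  | Sum.inl u => v = u
  | Sum.inr p => v = Sum.inl p.1 ∨ v = Sum.inr p.2

/-- The constraint matrix `A = (I | A')`: loop columns are unit vectors and
valid-edge columns are incidence vectors. -/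
def MA (k : ℕ) : MVert k → MCol k → ℚ := fun v e =>
  match e with
  | Sum.inl u => if v = u then 1 else 0
  | Sum.inr p => if v = Sum.inl p.1 ∨ v = Sum.inr p.2 then 1 else 0

/-- `B` is a feasible basis for `(A, b)` with associated basic solution `x`. -/
def MFeasBasis (k : ℕ) (B : Finset (MCol k)) (x : MCol k → ℚ)
    (b : MVert k → ℚ) : Prop :=
  B.card = 2 * k ∧
  LinearIndependent ℚ (fun j : B => fun v : MVert k => MA k v (j : MCol k)) ∧
  (∀ j, 0 ≤ x j) ∧ (∀ j ∉ B, x j = 0) ∧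
  (∀ v : MVert k, ∑ e : MCol k, MA k v e * x e = b v)

/-- `D` is an ordinal basis of `C`. -/
def MOrdBasis (k : ℕ) (C : MVert k → MCol k → ℤ) (D : Finset (MCol k)) : Prop :=
  D.card = 2 * k ∧ ∀ h : MCol k, ∃ v : MVert k, ∀ j ∈ D, C v h ≤ C v j

/-- The specific ordinal matrix `C` of the marriage construction: loop entries
are `0`; entries of incident valid edges lie in `M = {1,…,k}`; entries of
non-incident valid edges lie in `L = {k+1,…,k²}`; entries of other vertices'
loops lie in `XL = {k²+1,…,k²+2k−1}`; and all entries in a row are distinct. -/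
def MarriageC (k : ℕ) (C : MVert k → MCol k → ℤ) : Prop :=
  (∀ v, Function.Injective (C v)) ∧
  (∀ v : MVert k, C v (Sum.inl v) = 0) ∧
  (∀ (v : MVert k) (p : Fin k × Fin k), MInc v (Sum.inr p) →
      1 ≤ C v (Sum.inr p) ∧ C v (Sum.inr p) ≤ (k : ℤ)) ∧
  (∀ (v : MVert k) (p : Fin k × Fin k), ¬ MInc v (Sum.inr p) →
      (k : ℤ) + 1 ≤ C v (Sum.inr p) ∧ C v (Sum.inr p) ≤ (k : ℤ) ^ 2) ∧
  (∀ v u : MVert k, v ≠ u →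
      (k : ℤ) ^ 2 + 1 ≤ C v (Sum.inl u) ∧
      C v (Sum.inl u) ≤ (k : ℤ) ^ 2 + 2 * k - 1)

/-- `D` is an almost-feasible ordinal basis: an ordinal basis not containing
the loop column of `m₁` that shares `n − 1` columns with a feasible basis
containing the loop column of `m₁`. -/
def MAlmostFeasible (k : ℕ) (hk : 0 < k) (C : MVert k → MCol k → ℤ)
    (D : Finset (MCol k)) : Prop :=
  MOrdBasis k C D ∧
  (Sum.inl (Sum.inl (⟨0, hk⟩ : Fin k)) : MCol k) ∉ D ∧
  ∃ (B : Finset (MCol k)) (x : MCol k → ℚ),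
    MFeasBasis k B x (fun _ => 1) ∧
    (Sum.inl (Sum.inl (⟨0, hk⟩ : Fin k)) : MCol k) ∈ B ∧
    (B ∩ D).card = 2 * k - 1

/-- For an almost-feasible ordinal basis `D`, the utility of every agent other
than `m₁` lies in `S ∪ M = {0, …, k}`; equivalently, the row minimum of `C`
over `D` is attained at a column incident to the agent. -/
theorem almostFeasible_utility_in_S_union_M (k : ℕ) (hk : 0 < k)
    (C : MVert k → MCol k → ℤ) (hC : MarriageC k C)
    (D : Finset (MCol k)) (hD : MAlmostFeasible k hk C D) (hne : D.Nonempty) :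
    ∀ v : MVert k, v ≠ Sum.inl (⟨0, hk⟩ : Fin k) →
      (0 ≤ D.inf' hne (C v) ∧ D.inf' hne (C v) ≤ (k : ℤ)) ∧
      ∃ j ∈ D, MInc v j ∧ D.inf' hne (C v) = C v j := by
  obtain ⟨hord, hnotD, B, x, hB, hm1B, hcard⟩ := hD
  obtain ⟨hBcard, _, hx0, hxsupp, hsum⟩ := hB
  obtain ⟨hinj, hloop, hM, hL, hXL⟩ := hC
  intro v hv
  -- every entry in row v is nonnegative
  have hCnn : ∀ j, 0 ≤ C v j := by
    intro j
    cases j with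
    | inl u =>
        by_cases h : v = u
        · subst h; rw [hloop v]
        · have := (hXL v u h).1
          have hk2 : (0 : ℤ) ≤ (k : ℤ) ^ 2 := by positivity
          linarith
    | inr p =>
        by_cases h : MInc v (Sum.inr p)
        · have := (hM v p h).1; linarith
        · have := (hL v p h).1
          have : (0:ℤ) ≤ (k:ℤ) := Int.natCast_nonneg k
          linarith [(hL v p h).1]
  -- incident columns have value ≤ k
  have hincle : ∀ j, MInc v j → C v j ≤ (k : ℤ) := by
    intro j hj
    cases j with
    | inl u =>
        have : v = u := hj
        subst this; rw [hloop v]; exact_mod_cast Nat.zero_le k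
    | inr p => exact (hM v p hj).2
  -- D contains a column incident to v
  have hexists : ∃ e ∈ D, MInc v e := by
    have h1 : ∑ e : MCol k, MA k v e * x e = 1 := hsum v
    have hx : ∃ e : MCol k, MA k v e * x e ≠ 0 := by
      by_contra h
      push_neg at h
      rw [Finset.sum_congr rfl (fun e _ => h e)] at h1
      simp at h1
    obtain ⟨e, he⟩ := hx
    have hxe : x e ≠ 0 := fun h => he (by simp [h])
    have hAe : MA k v e ≠ 0 := fun h => he (by simp [h])
    have heB : e ∈ B := by
      by_contra h; exact hxe (hxsupp e h)
    have hinc : MInc v e := by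
      cases e with
      | inl u =>
          simp only [MInc]
          by_contra h
          simp only [MA, if_neg h] at hAe
          exact hAe rfl
      | inr p =>
          simp only [MInc]
          by_contra h
          simp only [MA, if_neg h] at hAe
          exact hAe rfl
    have hne1 : e ≠ Sum.inl (Sum.inl ⟨0, hk⟩) := by
      rintro rfl
      exact hv hinc
    have hsub : B ∩ D ⊆ B.erase (Sum.inl (Sum.inl ⟨0, hk⟩)) := by
      intro a ha
      rw [Finset.mem_inter] at ha
      rw [Finset.mem_erase]
      exact ⟨fun h => hnotD (h ▸ ha.2), ha.1⟩
    have hecard : (B.erase (Sum.inl (Sum.inl ⟨0, hk⟩))).card = 2 * k - 1 := by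
      rw [Finset.card_erase_of_mem hm1B, hBcard]
    have heq : B ∩ D = B.erase (Sum.inl (Sum.inl ⟨0, hk⟩)) :=
      Finset.eq_of_subset_of_card_le hsub (by rw [hecard, hcard])
    have : e ∈ B ∩ D := heq ▸ Finset.mem_erase.mpr ⟨hne1, heB⟩
    exact ⟨e, (Finset.mem_inter.mp this).2, hinc⟩
  obtain ⟨e, heD, hince⟩ := hexists
  have hinfle : D.inf' hne (C v) ≤ (k : ℤ) :=
    le_trans (Finset.inf'_le _ heD) (hincle e hince)
  have hinfnn : 0 ≤ D.inf' hne (C v) :=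
    Finset.le_inf' hne _ (fun j _ => hCnn j)
  refine ⟨⟨hinfnn, hinfle⟩, ?_⟩
  obtain ⟨j, hjD, hj⟩ := D.exists_mem_eq_inf' hne (C v)
  refine ⟨j, hjD, ?_, hj⟩
  have hjle : C v j ≤ (k : ℤ) := hj ▸ hinfle
  by_contra hninc
  cases j with
  | inl u =>
      have hvu : v ≠ u := fun h => hninc h
      have := (hXL v u hvu).1
      have hk1 : (1 : ℤ) ≤ (k : ℤ) := by exact_mod_cast hk
      nlinarith
  | inr p =>
      have := (hL v p hninc).1
      linarith
end

section
/- Let D be an almost-feasible ordinal basis (for the marriage-instance matrices A, C above) with associated feasible basis B, and suppose u_1 ∈ L (the utility of m_1 lies in the 'large' range, meaning no edge of D is incident to m_1). Then there exists a woman w̄ such that the loop (w̄, w̄) belongs to both E_B and E_D, and w̄ is unmatched (not covered by a valid edge) in the matching corresponding to B. -/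
open Finset

lemma tu_det_aux : ∀ (n : ℕ) (M : Matrix (Fin n) (Fin n) ℚ) (side : Fin n → Bool),
    (∀ i j, M i j = 0 ∨ M i j = 1) →
    (∀ j, (Finset.univ.filter fun i => M i j ≠ 0).card ≤ 2) →
    (∀ j i i', M i j ≠ 0 → M i' j ≠ 0 → i ≠ i' → side i ≠ side i') →
    M.det = 0 ∨ M.det = 1 ∨ M.det = -1 := by
  intro n
  induction n with
  | zero =>
    intro M _ _ _ _
    right; left
    simp [Matrix.det_isEmpty]
  | succ m ih =>
    intro M side hent hcard hside
    by_cases hsmall : ∃ j, (Finset.univ.filter fun i => M i j ≠ 0).card ≤ 1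
    · obtain ⟨j, hj⟩ := hsmall
      rcases Nat.le_one_iff_eq_zero_or_eq_one.mp hj with h0 | h1
      · -- zero column
        left
        apply Matrix.det_eq_zero_of_column_eq_zero j
        intro i
        by_contra hi
        have : i ∈ Finset.univ.filter fun i => M i j ≠ 0 := by simp [hi]
        rw [Finset.card_eq_zero] at h0
        simp [h0] at this
      · obtain ⟨i₀, hi₀⟩ := Finset.card_eq_one.mp h1
        have hmem : M i₀ j ≠ 0 := by
          have : i₀ ∈ Finset.univ.filter fun i => M i j ≠ 0 := by rw [hi₀]; simp
          simpa using this
        have hzero : ∀ i, i ≠ i₀ → M i j = 0 := by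
          intro i hi
          by_contra hne
          have : i ∈ Finset.univ.filter fun i => M i j ≠ 0 := by simp [hne]
          rw [hi₀] at this
          simp at this
          exact hi this
        have hone : M i₀ j = 1 := (hent i₀ j).resolve_left hmem
        rw [Matrix.det_succ_column M j]
        rw [Finset.sum_eq_single i₀]
        · set M' := M.submatrix i₀.succAbove j.succAbove with hM'
          have hd : M'.det = 0 ∨ M'.det = 1 ∨ M'.det = -1 := by
            apply ih M' (side ∘ i₀.succAbove)
            · intro i j'; exact hent _ _
            · intro j'
              have hsub : (Finset.univ.filter fun i => M' i j' ≠ 0).card ≤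
                  (Finset.univ.filter fun i => M i (j.succAbove j') ≠ 0).card := by
                apply Finset.card_le_card_of_injOn (fun i => i₀.succAbove i)
                · intro i hi
                  simp only [Finset.mem_coe, Finset.mem_filter, Finset.mem_univ, true_and] at hi ⊢
                  exact hi
                · intro a _ b _ hab
                  exact Fin.succAbove_right_injective hab
              exact hsub.trans (hcard _)
            · intro j' i i' hi hi' hne
              exact hside (j.succAbove j') _ _ hi hi'
                (fun h => hne (Fin.succAbove_right_injective h))
          have hsign := neg_one_pow_eq_or ℚ ((i₀ : ℕ) + (j : ℕ))
          rcases hsign with hs | hs <;> rcases hd with h | h | h <;>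
            rw [hs, hone, h] <;> norm_num
        · intro i _ hi
          rw [hzero i hi]
          ring
        · intro h
          exact absurd (Finset.mem_univ i₀) h
    · push_neg at hsmall
      left
      rw [← Matrix.det_transpose]
      rw [← Matrix.exists_mulVec_eq_zero_iff]
      refine ⟨fun i => if side i then (1 : ℚ) else -1, ?_, ?_⟩
      · intro h
        have := congrFun h 0
        by_cases h0 : side 0 <;> simp [h0] at this
      · funext j
        simp only [Matrix.mulVec, dotProduct, Matrix.transpose_apply, Pi.zero_apply]
        have hc2 : (Finset.univ.filter fun i => M i j ≠ 0).card = 2 :=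
          le_antisymm (hcard j) (hsmall j)
        obtain ⟨a, b, hab, hset⟩ := Finset.card_eq_two.mp hc2
        have ha : M a j ≠ 0 := by
          have : a ∈ Finset.univ.filter fun i => M i j ≠ 0 := by rw [hset]; simp
          simpa using this
        have hb : M b j ≠ 0 := by
          have : b ∈ Finset.univ.filter fun i => M i j ≠ 0 := by rw [hset]; simp
          simpa using this
        have ha1 : M a j = 1 := (hent a j).resolve_left ha
        have hb1 : M b j = 1 := (hent b j).resolve_left hb
        have hsd := hside j a b ha hb hab
        have hrw : ∑ i, M i j * (if side i then (1:ℚ) else -1) =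
            ∑ i ∈ Finset.univ.filter (fun i => M i j ≠ 0),
              M i j * (if side i then (1:ℚ) else -1) := by
          symm
          apply Finset.sum_filter_of_ne
          intro i _ hne hMi
          apply hne
          rw [hMi, zero_mul]
        rw [hrw, hset, Finset.sum_pair hab]
        simp only [ha1, hb1, one_mul]
        cases hsa : side a <;> cases hsb : side b <;>
          simp [hsa, hsb] at hsd ⊢


lemma int_det_aux {n : ℕ} (M : Matrix (Fin n) (Fin n) ℚ)
    (h : ∀ i j, ∃ z : ℤ, M i j = (z : ℚ)) : ∃ z : ℤ, M.det = (z : ℚ) := by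
  choose Z hZ using h
  refine ⟨(Matrix.of Z).det, ?_⟩
  have hM : M = (Matrix.of Z).map (Int.castRingHom ℚ) := by
    ext i j
    simp [Matrix.map_apply, hZ i j]
  rw [hM]
  rw [show (Matrix.of Z).map ⇑(Int.castRingHom ℚ) = (Int.castRingHom ℚ).mapMatrix (Matrix.of Z) from rfl]
  rw [← RingHom.map_det]
  rfl


lemma rowW_aux (k : ℕ) (x : MCol k → ℚ)
    (hxrow : ∀ v : MVert k, ∑ e : MCol k, MA k v e * x e = 1) (w : Fin k) :
    x (Sum.inl (Sum.inr w)) + ∑ i : Fin k, x (Sum.inr (i, w)) = 1 := by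
  have h := hxrow (Sum.inr w)
  rw [Fintype.sum_sum_type] at h
  have h1 : ∑ u : MVert k, MA k (Sum.inr w) (Sum.inl u) * x (Sum.inl u)
      = x (Sum.inl (Sum.inr w)) := by
    simp [MA, ite_mul, Finset.sum_ite_eq]
  have h2 : ∑ p : Fin k × Fin k, MA k (Sum.inr w) (Sum.inr p) * x (Sum.inr p)
      = ∑ i : Fin k, x (Sum.inr (i, w)) := by
    rw [Fintype.sum_prod_type]
    apply Finset.sum_congr rfl
    intro i _
    simp [MA, ite_mul, Finset.sum_ite_eq']
  rw [h1, h2] at h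
  exact h


lemma rowM_aux (k : ℕ) (x : MCol k → ℚ)
    (hxrow : ∀ v : MVert k, ∑ e : MCol k, MA k v e * x e = 1) (i : Fin k) :
    x (Sum.inl (Sum.inl i)) + ∑ w : Fin k, x (Sum.inr (i, w)) = 1 := by
  have h := hxrow (Sum.inl i)
  rw [Fintype.sum_sum_type] at h
  have h1 : ∑ u : MVert k, MA k (Sum.inl i) (Sum.inl u) * x (Sum.inl u)
      = x (Sum.inl (Sum.inl i)) := by
    simp [MA, ite_mul, Finset.sum_ite_eq]
  have h2 : ∑ p : Fin k × Fin k, MA k (Sum.inl i) (Sum.inr p) * x (Sum.inr p)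
      = ∑ w : Fin k, x (Sum.inr (i, w)) := by
    rw [Fintype.sum_prod_type_right]
    apply Finset.sum_congr rfl
    intro w _
    simp [MA, ite_mul, Finset.sum_ite_eq]
  rw [h1, h2] at h
  exact h

lemma x_int_aux (k : ℕ) (B : Finset (MCol k)) (x : MCol k → ℚ)
    (hBcard : B.card = 2 * k)
    (hBind : LinearIndependent ℚ (fun j : B => fun v : MVert k => MA k v (j : MCol k)))
    (hxsupp : ∀ j ∉ B, x j = 0)
    (hxrow : ∀ v : MVert k, ∑ e : MCol k, MA k v e * x e = 1) :
    ∀ e : MCol k, ∃ z : ℤ, x e = (z : ℚ) := by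
  have hcardMV : Fintype.card (MVert k) = 2 * k := by
    simp [Fintype.card_sum]; ring
  have hcardB : Fintype.card {j // j ∈ B} = 2 * k := by
    rw [Fintype.card_coe]; exact hBcard
  set e₁ : Fin (2 * k) ≃ MVert k := (Fintype.equivFinOfCardEq hcardMV).symm with he₁
  set e₂ : Fin (2 * k) ≃ {j // j ∈ B} := (Fintype.equivFinOfCardEq hcardB).symm with he₂
  set N : Matrix (Fin (2 * k)) (Fin (2 * k)) ℚ :=
    Matrix.of fun r c => MA k (e₁ r) ((e₂ c : MCol k)) with hN
  -- entries are 0 or 1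
  have hent : ∀ r c, N r c = 0 ∨ N r c = 1 := by
    intro r c
    show MA k (e₁ r) ((e₂ c : MCol k)) = 0 ∨ MA k (e₁ r) ((e₂ c : MCol k)) = 1
    rcases (e₂ c : MCol k) with u | p
    · by_cases h : e₁ r = u
      · right; simp [MA, h]
      · left; simp [MA, h]
    · by_cases h : e₁ r = Sum.inl p.1 ∨ e₁ r = Sum.inr p.2
      · right; simp [MA, h]
      · left; simp [MA, h]
  -- independence of columns
  have hind : LinearIndependent ℚ (fun c : Fin (2 * k) => N.transpose c) := by
    have h1 : LinearIndependent ℚ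
        (fun c : Fin (2 * k) => fun v : MVert k => MA k v ((e₂ c : MCol k))) :=
      hBind.comp e₂ e₂.injective
    have h2 := h1.map' (LinearEquiv.funCongrLeft ℚ ℚ e₁).toLinearMap
      (LinearEquiv.funCongrLeft ℚ ℚ e₁).ker
    exact h2
  have hunit : IsUnit N := Matrix.linearIndependent_cols_iff_isUnit.mp hind
  have hdet : IsUnit N.det := (Matrix.isUnit_iff_isUnit_det N).mp hunit
  -- TU: det = ±1
  have hdet01 := tu_det_aux (2 * k) N (fun r => (e₁ r).isLeft) hent ?hcard ?hside
  case hcard =>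
    intro c
    rcases he : (e₂ c : MCol k) with u | p
    · have hsub : (Finset.univ.filter fun r => N r c ≠ 0) ⊆ {e₁.symm u} := by
        intro r hr
        simp only [Finset.mem_filter, Finset.mem_univ, true_and] at hr
        have : MA k (e₁ r) (Sum.inl u) ≠ 0 := by
          simpa [hN, Matrix.of_apply, he] using hr
        simp only [MA, ne_eq, ite_eq_right_iff, one_ne_zero] at this
        have : e₁ r = u := by by_contra hc; simp [hc] at this
        simp [← this]
      calc _ ≤ ({e₁.symm u} : Finset _).card := Finset.card_le_card hsub
        _ ≤ 2 := by simp
    · have hsub : (Finset.univ.filter fun r => N r c ≠ 0) ⊆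
          {e₁.symm (Sum.inl p.1), e₁.symm (Sum.inr p.2)} := by
        intro r hr
        simp only [Finset.mem_filter, Finset.mem_univ, true_and] at hr
        have : MA k (e₁ r) (Sum.inr p) ≠ 0 := by
          simpa [hN, Matrix.of_apply, he] using hr
        simp only [MA, ne_eq, ite_eq_right_iff, one_ne_zero] at this
        have hor : e₁ r = Sum.inl p.1 ∨ e₁ r = Sum.inr p.2 := by
          by_contra hc
          push_neg at hc
          simp [hc.1, hc.2] at this
        rcases hor with h | h <;> simp [← h]
      calc _ ≤ ({e₁.symm (Sum.inl p.1), e₁.symm (Sum.inr p.2)} : Finset _).card :=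
            Finset.card_le_card hsub
        _ ≤ 2 := Finset.card_insert_le _ _ |>.trans (by simp)
  case hside =>
    intro c r r' hr hr' hrr
    rcases he : (e₂ c : MCol k) with u | p
    · exfalso
      have h1 : MA k (e₁ r) (Sum.inl u) ≠ 0 := by simpa [hN, Matrix.of_apply, he] using hr
      have h2 : MA k (e₁ r') (Sum.inl u) ≠ 0 := by simpa [hN, Matrix.of_apply, he] using hr'
      simp only [MA, ne_eq, ite_eq_right_iff, one_ne_zero] at h1 h2
      have e1 : e₁ r = u := by by_contra hc; simp [hc] at h1
      have e2 : e₁ r' = u := by by_contra hc; simp [hc] at h2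
      exact hrr (e₁.injective (e1.trans e2.symm))
    · have h1 : MA k (e₁ r) (Sum.inr p) ≠ 0 := by simpa [hN, Matrix.of_apply, he] using hr
      have h2 : MA k (e₁ r') (Sum.inr p) ≠ 0 := by simpa [hN, Matrix.of_apply, he] using hr'
      simp only [MA, ne_eq, ite_eq_right_iff, one_ne_zero] at h1 h2
      have hor1 : e₁ r = Sum.inl p.1 ∨ e₁ r = Sum.inr p.2 := by
        by_contra hc; push_neg at hc; simp [hc.1, hc.2] at h1
      have hor2 : e₁ r' = Sum.inl p.1 ∨ e₁ r' = Sum.inr p.2 := by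
        by_contra hc; push_neg at hc; simp [hc.1, hc.2] at h2
      have hne : e₁ r ≠ e₁ r' := fun h => hrr (e₁.injective h)
      rcases hor1 with h1' | h1' <;> rcases hor2 with h2' | h2'
      · exact absurd (h1'.trans h2'.symm) hne
      · simp_all [Sum.isLeft]
      · simp_all [Sum.isLeft]
      · exact absurd (h1'.trans h2'.symm) hne
  -- det = ±1
  have hdetpm : N.det = 1 ∨ N.det = -1 := by
    rcases hdet01 with h | h | h
    · rw [h] at hdet; simp at hdet
    · exact Or.inl h
    · exact Or.inr h
  -- x on B via Cramer
  set xB : Fin (2 * k) → ℚ := fun c => x ((e₂ c : MCol k)) with hxB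
  have hNx : N.mulVec xB = fun _ => 1 := by
    funext r
    simp only [Matrix.mulVec, dotProduct]
    calc ∑ c : Fin (2 * k), N r c * xB c
        = ∑ j : {j // j ∈ B}, MA k (e₁ r) (j : MCol k) * x (j : MCol k) := by
          exact Equiv.sum_comp e₂ (fun j => MA k (e₁ r) (j : MCol k) * x (j : MCol k))
      _ = ∑ j ∈ B, MA k (e₁ r) j * x j :=
          Finset.sum_coe_sort B (fun e => MA k (e₁ r) e * x e)
      _ = ∑ e : MCol k, MA k (e₁ r) e * x e := by
          apply Finset.sum_subset (Finset.subset_univ B)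
          intro e _ he
          rw [hxsupp e he, mul_zero]
      _ = 1 := hxrow (e₁ r)
  have hxBinv : xB = N⁻¹.mulVec (fun _ => 1) := by
    have h3 : N⁻¹.mulVec (N.mulVec xB) = xB := by
      rw [Matrix.mulVec_mulVec, Matrix.nonsing_inv_mul N hdet, Matrix.one_mulVec]
    rw [← h3, hNx]
  have hcram := Matrix.det_smul_inv_mulVec_eq_cramer N (fun _ => 1) hdet
  rw [← hxBinv] at hcram
  have hint : ∀ c : Fin (2 * k), ∃ z : ℤ, xB c = (z : ℚ) := by
    intro c
    have h4 : N.det * xB c = (N.updateCol c (fun _ => 1)).det := by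
      have := congrFun hcram c
      simpa [Matrix.cramer_apply] using this
    have hup : ∀ i j, ∃ z : ℤ, (N.updateCol c (fun _ => 1)) i j = (z : ℚ) := by
      intro i j
      rw [Matrix.updateCol_apply]
      split_ifs
      · exact ⟨1, by norm_num⟩
      · rcases hent i j with h | h
        · exact ⟨0, by simp [h]⟩
        · exact ⟨1, by simp [h]⟩
    obtain ⟨z, hz⟩ := int_det_aux (N.updateCol c (fun _ => 1)) hup
    rcases hdetpm with h | h
    · exact ⟨z, by rw [h, one_mul] at h4; rw [h4, hz]⟩
    · refine ⟨-z, ?_⟩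
      rw [h] at h4
      rw [hz] at h4
      push_cast
      linarith
  intro e
  by_cases he : e ∈ B
  · obtain ⟨z, hz⟩ := hint (e₂.symm ⟨e, he⟩)
    refine ⟨z, ?_⟩
    rw [← hz]
    simp [hxB]
  · exact ⟨0, by simp [hxsupp e he]⟩


/-- If `D` is an almost-feasible ordinal basis with associated feasible basis
`B = (D \ {j_t}) ∪ {1}` and the utility `u₁` of `m₁` lies in the large range
`L = {k+1,…,k²}` (no edge of `D` is incident to `m₁`), then some woman `w̄` has
her loop in both `B` and `D` and is unmatched (covered by no valid edge) in the
matching corresponding to `B`. -/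
theorem exists_unmatched_woman_loop (k : ℕ) (hk : 0 < k)
    (C : MVert k → MCol k → ℤ) (hC : MarriageC k C)
    (D : Finset (MCol k)) (hne : D.Nonempty)
    (hord : MOrdBasis k C D)
    (hm1 : (Sum.inl (Sum.inl (⟨0, hk⟩ : Fin k)) : MCol k) ∉ D)
    (jt : MCol k) (hjt : jt ∈ D)
    (B : Finset (MCol k)) (x : MCol k → ℚ)
    (hB : B = insert (Sum.inl (Sum.inl (⟨0, hk⟩ : Fin k)) : MCol k) (D.erase jt))
    (hfeas : MFeasBasis k B x (fun _ => 1))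
    (hL : (k : ℤ) + 1 ≤ D.inf' hne (C (Sum.inl ⟨0, hk⟩)) ∧
          D.inf' hne (C (Sum.inl ⟨0, hk⟩)) ≤ (k : ℤ) ^ 2) :
    ∃ w : Fin k,
      (Sum.inl (Sum.inr w) : MCol k) ∈ B ∧
      (Sum.inl (Sum.inr w) : MCol k) ∈ D ∧
      ∀ i : Fin k, x (Sum.inr (i, w)) = 0 := by
  obtain ⟨hBcard, hBind, hxnn, hxsupp, hxrow⟩ := hfeas
  set m0 : Fin k := ⟨0, hk⟩ with hm0
  -- edges incident to m₁ are not in D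
  have hDedge : ∀ w : Fin k, (Sum.inr (m0, w) : MCol k) ∉ D := by
    intro w hmem
    have h1 : D.inf' hne (C (Sum.inl m0)) ≤ C (Sum.inl m0) (Sum.inr (m0, w)) :=
      Finset.inf'_le _ hmem
    have h2 : C (Sum.inl m0) (Sum.inr (m0, w)) ≤ (k : ℤ) :=
      (hC.2.2.1 (Sum.inl m0) (m0, w) (Or.inl rfl)).2
    have h3 := hL.1
    linarith
  -- edges incident to m₁ are not in B, so x vanishes on them
  have hxedge0 : ∀ w, x (Sum.inr (m0, w)) = 0 := by
    intro w
    apply hxsupp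
    rw [hB]
    intro hmem
    rcases Finset.mem_insert.mp hmem with h | h
    · exact absurd h (by simp)
    · exact hDedge w (Finset.mem_of_mem_erase h)
  -- row equations
  have hxrow' : ∀ v : MVert k, ∑ e : MCol k, MA k v e * x e = 1 := fun v => hxrow v
  have rowW : ∀ w : Fin k,
      x (Sum.inl (Sum.inr w)) + ∑ i : Fin k, x (Sum.inr (i, w)) = 1 :=
    fun w => rowW_aux k x hxrow' w
  have rowM : ∀ i : Fin k,
      x (Sum.inl (Sum.inl i)) + ∑ w : Fin k, x (Sum.inr (i, w)) = 1 :=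
    fun i => rowM_aux k x hxrow' i
  -- integrality
  have hintall : ∀ e : MCol k, ∃ z : ℤ, x e = (z : ℚ) :=
    x_int_aux k B x hBcard hBind hxsupp hxrow'
  -- some woman has zero edge mass
  have key : ∃ w : Fin k, ∀ i : Fin k, x (Sum.inr (i, w)) = 0 := by
    by_contra hcon
    push_neg at hcon
    have hsw : ∀ w : Fin k, (1 : ℚ) ≤ ∑ i : Fin k, x (Sum.inr (i, w)) := by
      intro w
      obtain ⟨i, hi⟩ := hcon w
      have hpos : 0 < ∑ i : Fin k, x (Sum.inr (i, w)) :=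
        Finset.sum_pos' (fun i _ => hxnn _)
          ⟨i, Finset.mem_univ i, lt_of_le_of_ne (hxnn _) (Ne.symm hi)⟩
      choose z hz using fun i : Fin k => hintall (Sum.inr (i, w))
      have hzz : (∑ i : Fin k, x (Sum.inr (i, w))) = ((∑ i : Fin k, z i : ℤ) : ℚ) := by
        push_cast
        exact Finset.sum_congr rfl fun i _ => hz i
      rw [hzz] at hpos ⊢
      have : (0 : ℤ) < ∑ i : Fin k, z i := by exact_mod_cast hpos
      have : (1 : ℤ) ≤ ∑ i : Fin k, z i := this
      exact_mod_cast this
    have hsum1 : (k : ℚ) ≤ ∑ w : Fin k, ∑ i : Fin k, x (Sum.inr (i, w)) := by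
      calc (k : ℚ) = ∑ _w : Fin k, (1 : ℚ) := by simp
      _ ≤ _ := Finset.sum_le_sum fun w _ => hsw w
    rw [Finset.sum_comm] at hsum1
    have hti : ∀ i : Fin k, ∑ w : Fin k, x (Sum.inr (i, w)) ≤ 1 := by
      intro i
      have h := rowM i
      have := hxnn (Sum.inl (Sum.inl i))
      linarith
    have ht0 : ∑ w : Fin k, x (Sum.inr (m0, w)) = 0 :=
      Finset.sum_eq_zero fun w _ => hxedge0 w
    have hle : ∑ i : Fin k, ∑ w : Fin k, x (Sum.inr (i, w)) ≤ (k : ℚ) - 1 := by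
      rw [← Finset.sum_erase_add _ _ (Finset.mem_univ m0), ht0, add_zero]
      calc ∑ i ∈ Finset.univ.erase m0, ∑ w : Fin k, x (Sum.inr (i, w))
          ≤ ∑ _i ∈ Finset.univ.erase m0, (1 : ℚ) :=
            Finset.sum_le_sum fun i _ => hti i
        _ = ((Finset.univ.erase m0).card : ℚ) := by simp
        _ = (k : ℚ) - 1 := by
            rw [Finset.card_erase_of_mem (Finset.mem_univ m0)]
            rw [Finset.card_univ, Fintype.card_fin]
            have : (1 : ℕ) ≤ k := hk
            push_cast [Nat.cast_sub this]
            ring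
    linarith
  obtain ⟨w, hw⟩ := key
  have hs0 : ∑ i : Fin k, x (Sum.inr (i, w)) = 0 := Finset.sum_eq_zero fun i _ => hw i
  have hloopB : (Sum.inl (Sum.inr w) : MCol k) ∈ B := by
    by_contra hnB
    have h := rowW w
    rw [hxsupp _ hnB, hs0] at h
    norm_num at h
  have hloopD : (Sum.inl (Sum.inr w) : MCol k) ∈ D := by
    rw [hB] at hloopB
    rcases Finset.mem_insert.mp hloopB with h | h
    · simp at h
    · exact Finset.mem_of_mem_erase h
  exact ⟨w, hloopB, hloopD, hw⟩
end

section
/- Let D be an almost-feasible ordinal basis with u_1 ∈ L and with D containing at least one loop column from {2,…,k} (a man's loop). Then there exists an index i with 2 ≤ i ≤ k (the separator) such that in the graph G_D: m_i is incident to both its loop and at least one valid edge; each of m_2,…,m_{i−1} is incident to valid edges only; each of m_{i+1},…,m_k is incident only to its own loop; and m_1 is incident to no edge of D. -/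
open Finset

/-- Position of a column in the ordering of the construction: loops of men
first (by index), then loops of women, then for each man his block of valid
edges ordered by decreasing preference (the edge of value `k+1−ℓ`, i.e. the
`ℓ`-th best choice, sits in position `ℓ` of the block). -/
def MColIndex (k : ℕ) (C : MVert k → MCol k → ℤ) : MCol k → ℕ := fun e =>
  match e with
  | Sum.inl (Sum.inl i) => i.val
  | Sum.inl (Sum.inr j) => k + j.val
  | Sum.inr p => 2 * k + p.1.val * k + (k + 1 - (C (Sum.inl p.1) (Sum.inr p)).toNat)

/-- The full marriage construction: the value ranges of `MarriageC`, and the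
values in `L` (resp. `XL`) are assigned in decreasing order from left to right
along each row. -/
def FullMarriageC (k : ℕ) (C : MVert k → MCol k → ℤ) : Prop :=
  MarriageC k C ∧
  (∀ (v : MVert k) (p q : Fin k × Fin k),
      ¬ MInc v (Sum.inr p) → ¬ MInc v (Sum.inr q) →
      MColIndex k C (Sum.inr p) < MColIndex k C (Sum.inr q) →
      C v (Sum.inr q) < C v (Sum.inr p)) ∧
  (∀ v u u' : MVert k, v ≠ u → v ≠ u' →
      MColIndex k C (Sum.inl u) < MColIndex k C (Sum.inl u') →
      C v (Sum.inl u') < C v (Sum.inl u))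

section SeparatorAux

variable {k : ℕ} {C : MVert k → MCol k → ℤ}

lemma MA_of_not_inc {v : MVert k} {e : MCol k} (h : ¬ MInc v e) : MA k v e = 0 := by
  cases e with
  | inl u => exact if_neg h
  | inr p => exact if_neg h

lemma edge_range (hM : MarriageC k C) (p : Fin k × Fin k) :
    1 ≤ C (Sum.inl p.1) (Sum.inr p) ∧ C (Sum.inl p.1) (Sum.inr p) ≤ (k : ℤ) :=
  hM.2.2.1 (Sum.inl p.1) p (Or.inl rfl)

lemma idx_lt_of_fst_lt (hM : MarriageC k C) {p q : Fin k × Fin k}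
    (h : p.1.val < q.1.val) :
    MColIndex k C (Sum.inr p) < MColIndex k C (Sum.inr q) := by
  obtain ⟨h1p, h2p⟩ := edge_range hM p
  obtain ⟨h1q, h2q⟩ := edge_range hM q
  have hmul : (p.1.val + 1) * k ≤ q.1.val * k := Nat.mul_le_mul_right k h
  simp only [MColIndex]
  have hap : 1 ≤ (C (Sum.inl p.1) (Sum.inr p)).toNat ∧
      (C (Sum.inl p.1) (Sum.inr p)).toNat ≤ k := by omega
  have haq : 1 ≤ (C (Sum.inl q.1) (Sum.inr q)).toNat ∧
      (C (Sum.inl q.1) (Sum.inr q)).toNat ≤ k := by omega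
  have h1 : 2 * k + p.1.val * k + (k + 1 - (C (Sum.inl p.1) (Sum.inr p)).toNat)
      ≤ 2 * k + (p.1.val + 1) * k := by
    have : (p.1.val + 1) * k = p.1.val * k + k := by ring
    omega
  have h2 : 2 * k + q.1.val * k <
      2 * k + q.1.val * k + (k + 1 - (C (Sum.inl q.1) (Sum.inr q)).toNat) := by
    omega
  omega

lemma val_lt_of_idx_lt_same (hM : MarriageC k C) {p q : Fin k × Fin k}
    (hfst : q.1 = p.1)
    (h : MColIndex k C (Sum.inr p) < MColIndex k C (Sum.inr q)) :
    C (Sum.inl p.1) (Sum.inr q) < C (Sum.inl p.1) (Sum.inr p) := by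
  obtain ⟨h1p, h2p⟩ := edge_range hM p
  obtain ⟨h1q, h2q⟩ := edge_range hM q
  rw [hfst] at h1q h2q
  simp only [MColIndex, hfst] at h
  generalize p.1.val * k = t at h
  omega

lemma idx_inj (hM : MarriageC k C) {p q : Fin k × Fin k}
    (h : MColIndex k C (Sum.inr p) = MColIndex k C (Sum.inr q)) : p = q := by
  rcases lt_trichotomy p.1.val q.1.val with hlt | heq | hgt
  · exact absurd h (idx_lt_of_fst_lt hM hlt).ne
  · have hfst : q.1 = p.1 := Fin.val_injective heq.symm
    obtain ⟨h1p, h2p⟩ := edge_range hM p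
    obtain ⟨h1q, h2q⟩ := edge_range hM q
    rw [hfst] at h1q h2q
    simp only [MColIndex, hfst] at h
    generalize p.1.val * k = t at h
    have hCeq : C (Sum.inl p.1) (Sum.inr p) = C (Sum.inl p.1) (Sum.inr q) := by omega
    have := hM.1 (Sum.inl p.1) hCeq
    exact (Sum.inr_injective this)
  · exact absurd h.symm (idx_lt_of_fst_lt hM hgt).ne

end SeparatorAux

lemma no_early_loop (k : ℕ) (hk : 0 < k) (D B : Finset (MCol k)) (x : MCol k → ℚ)
    (hFeas : MFeasBasis k B x (fun _ => 1))
    (hBsub : ∀ e ∈ B, e = Sum.inl (Sum.inl (⟨0, hk⟩ : Fin k)) ∨ e ∈ D)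
    (hnot : ∀ e ∈ D, ¬ MInc (Sum.inl (⟨0, hk⟩ : Fin k)) e)
    (hW : ∀ b : Fin k, (Sum.inl (Sum.inr b) : MCol k) ∉ D) : False := by
  classical
  obtain ⟨hcardB, hind, hx0, hxB, hcov⟩ := hFeas
  set y : MVert k → ℚ := Sum.elim
      (fun a => if (∃ b', (Sum.inr (a, b') : MCol k) ∈ D) then (-1 : ℚ) else 0)
      (fun _ => (1 : ℚ)) with hy
  have hy0 : y (Sum.inl (⟨0, hk⟩ : Fin k)) = 0 := by
    rw [hy]
    simp only [Sum.elim_inl]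
    refine if_neg ?_
    rintro ⟨b', hb'⟩
    exact hnot _ hb' (Or.inl rfl)
  have hyle : ∀ a : Fin k, y (Sum.inl a) ≤ 0 := by
    intro a
    rw [hy]; simp only [Sum.elim_inl]
    split_ifs <;> norm_num
  have hgl : ∀ u : MVert k, (∑ v : MVert k, y v * MA k v (Sum.inl u)) = y u := by
    intro u
    have : ∀ v : MVert k, y v * MA k v (Sum.inl u) = if v = u then y v else 0 := by
      intro v
      by_cases h : v = u
      · simp [MA, h]
      · simp [MA, h]
    rw [Finset.sum_congr rfl (fun v _ => this v)]
    exact Fintype.sum_ite_eq' u y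
  have hgr : ∀ q : Fin k × Fin k,
      (∑ v : MVert k, y v * MA k v (Sum.inr q)) = y (Sum.inl q.1) + y (Sum.inr q.2) := by
    intro q
    have hsplit : ∀ v : MVert k, y v * MA k v (Sum.inr q) =
        (if v = Sum.inl q.1 then y v else 0) + (if v = Sum.inr q.2 then y v else 0) := by
      intro v
      by_cases h1 : v = Sum.inl q.1
      · subst h1
        have h2 : (Sum.inl q.1 : MVert k) ≠ Sum.inr q.2 := by simp
        simp [MA, h2]
      · by_cases h2 : v = Sum.inr q.2
        · subst h2
          simp [MA, h1]
        · have : ¬ (v = Sum.inl q.1 ∨ v = Sum.inr q.2) := by tauto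
          simp [MA, this, h1, h2]
    rw [Finset.sum_congr rfl (fun v _ => hsplit v), Finset.sum_add_distrib,
      Fintype.sum_ite_eq' (Sum.inl q.1) y, Fintype.sum_ite_eq' (Sum.inr q.2) y]
  have hterm : ∀ e : MCol k, x e * (∑ v : MVert k, y v * MA k v e) ≤ 0 := by
    intro e
    by_cases heB : e ∈ B
    · rcases hBsub e heB with rfl | heD
      · rw [hgl, hy0, mul_zero]
      · cases e with
        | inl u =>
          cases u with
          | inl a =>
            rw [hgl]
            have := mul_le_mul_of_nonneg_left (hyle a) (hx0 (Sum.inl (Sum.inl a)))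
            simpa using this
          | inr b => exact absurd heD (hW b)
        | inr q =>
          rw [hgr]
          have h1 : y (Sum.inl q.1) = -1 := by
            rw [hy]; simp only [Sum.elim_inl]
            exact if_pos ⟨q.2, by simpa using heD⟩
          have h2 : y (Sum.inr q.2) = 1 := by rw [hy]; simp
          rw [h1, h2]; norm_num
    · rw [hxB e heB, zero_mul]
  have key : (∑ v : MVert k, y v) = ∑ e : MCol k, x e * (∑ v : MVert k, y v * MA k v e) := by
    calc (∑ v : MVert k, y v)
        = ∑ v : MVert k, y v * (∑ e : MCol k, MA k v e * x e) := by
          refine Finset.sum_congr rfl (fun v _ => ?_)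
          rw [hcov v, mul_one]
      _ = ∑ v : MVert k, ∑ e : MCol k, y v * (MA k v e * x e) := by
          refine Finset.sum_congr rfl (fun v _ => ?_)
          rw [Finset.mul_sum]
      _ = ∑ e : MCol k, ∑ v : MVert k, y v * (MA k v e * x e) := Finset.sum_comm
      _ = ∑ e : MCol k, x e * (∑ v : MVert k, y v * MA k v e) := by
          refine Finset.sum_congr rfl (fun e _ => ?_)
          rw [Finset.mul_sum]
          refine Finset.sum_congr rfl (fun v _ => ?_)
          ring
  have hS : (∑ v : MVert k, y v) ≤ 0 := by
    rw [key]
    exact Finset.sum_nonpos (fun e _ => hterm e)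
  have hS' : (1 : ℚ) ≤ ∑ v : MVert k, y v := by
    rw [Fintype.sum_sum_type]
    have h2 : (∑ b : Fin k, y (Sum.inr b)) = (k : ℚ) := by
      rw [hy]; simp [Finset.sum_const, Finset.card_univ]
    have h1 : (1 : ℚ) - (k : ℚ) ≤ ∑ a : Fin k, y (Sum.inl a) := by
      have hpt : ∀ a ∈ (Finset.univ : Finset (Fin k)),
          (if a = (⟨0, hk⟩ : Fin k) then (0 : ℚ) else -1) ≤ y (Sum.inl a) := by
        intro a _
        by_cases ha : a = (⟨0, hk⟩ : Fin k)
        · subst ha; rw [if_pos rfl, hy0]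
        · rw [if_neg ha]
          rw [hy]; simp only [Sum.elim_inl]
          split_ifs <;> norm_num
      have h3 := Finset.sum_le_sum hpt
      have h4 : (∑ a : Fin k, (if a = (⟨0, hk⟩ : Fin k) then (0 : ℚ) else -1))
          = (1 : ℚ) - (k : ℚ) := by
        have : ∀ a : Fin k, (if a = (⟨0, hk⟩ : Fin k) then (0 : ℚ) else -1)
            = (if a = (⟨0, hk⟩ : Fin k) then (1 : ℚ) else 0) - 1 := by
          intro a; split_ifs <;> ring
        rw [Finset.sum_congr rfl (fun a _ => this a), Finset.sum_sub_distrib,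
          Fintype.sum_ite_eq' (⟨0, hk⟩ : Fin k) (fun _ => (1 : ℚ))]
        simp [Finset.sum_const, Finset.card_univ]
      linarith
    rw [h2]
    linarith
  linarith

/-- **Separator.** If `D` is an almost-feasible ordinal basis with `u₁ ∈ L`
containing the loop of some man other than `m₁`, then there is a man `m_i`
(`i ≠ 1`), the separator, such that in `G_D`: `m_i` is incident to both its
loop and some valid edge; each man strictly between `m₁` and `m_i` is incident
to valid edges only (no loop, at least one valid edge); each man after `m_i` is
incident only to its own loop; and `m₁` is incident to no edge of `D`. -/
theorem separator_exists (k : ℕ) (hk : 0 < k)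
    (C : MVert k → MCol k → ℤ) (hC : FullMarriageC k C)
    (D : Finset (MCol k)) (hne : D.Nonempty)
    (hD : MAlmostFeasible k hk C D)
    (hL : (k : ℤ) + 1 ≤ D.inf' hne (C (Sum.inl ⟨0, hk⟩)) ∧
          D.inf' hne (C (Sum.inl ⟨0, hk⟩)) ≤ (k : ℤ) ^ 2)
    (hloop : ∃ i : Fin k, i ≠ ⟨0, hk⟩ ∧ (Sum.inl (Sum.inl i) : MCol k) ∈ D) :
    ∃ i : Fin k, i ≠ ⟨0, hk⟩ ∧
      ((Sum.inl (Sum.inl i) : MCol k) ∈ D ∧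
        ∃ p : Fin k × Fin k, p.1 = i ∧ (Sum.inr p : MCol k) ∈ D) ∧
      (∀ i' : Fin k, 0 < i'.val → i'.val < i.val →
        (Sum.inl (Sum.inl i') : MCol k) ∉ D ∧
        ∃ p : Fin k × Fin k, p.1 = i' ∧ (Sum.inr p : MCol k) ∈ D) ∧
      (∀ i' : Fin k, i.val < i'.val →
        (Sum.inl (Sum.inl i') : MCol k) ∈ D ∧
        ∀ p : Fin k × Fin k, (Sum.inr p : MCol k) ∈ D → p.1 ≠ i') ∧
      (∀ e ∈ D, ¬ MInc (Sum.inl ⟨0, hk⟩) e) := by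
  classical
  obtain ⟨hM', hLord, hXLord⟩ := hC
  obtain ⟨hinj, hloop0, hMr, hLr, hXLr⟩ := hM'
  have hM : MarriageC k C := ⟨hinj, hloop0, hMr, hLr, hXLr⟩
  obtain ⟨hOrd, hl1notD, B, x, hFeas, hl1B, hBDcard⟩ := hD
  have hk1 : (1 : ℤ) ≤ (k : ℤ) := by exact_mod_cast hk
  have hge : ∀ e ∈ D, (k : ℤ) + 1 ≤ C (Sum.inl (⟨0, hk⟩ : Fin k)) e := fun e he =>
    le_trans hL.1 (Finset.inf'_le _ he)
  have hnot : ∀ e ∈ D, ¬ MInc (Sum.inl (⟨0, hk⟩ : Fin k)) e := by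
    intro e he hincl
    cases e with
    | inl u =>
      have h : (Sum.inl (⟨0, hk⟩ : Fin k) : MVert k) = u := hincl
      subst h
      exact hl1notD he
    | inr p =>
      have h1 := (hMr _ p hincl).2
      have h2 := hge _ he
      linarith
  have hBD : B ∩ D = B.erase (Sum.inl (Sum.inl (⟨0, hk⟩ : Fin k))) := by
    apply Finset.eq_of_subset_of_card_le
    · intro c hc
      rw [Finset.mem_erase]
      obtain ⟨hcB, hcD⟩ := Finset.mem_inter.mp hc
      exact ⟨fun h => hl1notD (h ▸ hcD), hcB⟩
    · rw [Finset.card_erase_of_mem hl1B, hFeas.1, hBDcard]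
  have hBsub : ∀ e ∈ B, e = Sum.inl (Sum.inl (⟨0, hk⟩ : Fin k)) ∨ e ∈ D := by
    intro e he
    by_cases h : e = Sum.inl (Sum.inl (⟨0, hk⟩ : Fin k))
    · exact Or.inl h
    · right
      have : e ∈ B.erase (Sum.inl (Sum.inl (⟨0, hk⟩ : Fin k))) := Finset.mem_erase.mpr ⟨h, he⟩
      rw [← hBD] at this
      exact (Finset.mem_inter.mp this).2
  -- the argmin function
  have hmin : ∀ v : MVert k, ∃ e, e ∈ D ∧ ∀ e' ∈ D, C v e ≤ C v e' := by
    intro v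
    obtain ⟨e, he, hm⟩ := D.exists_min_image (C v) hne
    exact ⟨e, he, hm⟩
  choose f hfD hfmin using hmin
  have hfsurj : ∀ e ∈ D, ∃ v, f v = e := by
    intro e he
    obtain ⟨v, hv⟩ := hOrd.2 e
    exact ⟨v, hinj v (le_antisymm (hfmin v e he) (hv (f v) (hfD v)))⟩
  have hfinj : Function.Injective f := by
    have himg : Finset.image f Finset.univ = D := by
      apply Finset.Subset.antisymm
      · intro e he
        obtain ⟨v, _, rfl⟩ := Finset.mem_image.mp he
        exact hfD v
      · intro e he
        obtain ⟨v, hv⟩ := hfsurj e he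
        exact Finset.mem_image.mpr ⟨v, Finset.mem_univ v, hv⟩
    have hcards : (Finset.univ.image f).card = (Finset.univ : Finset (MVert k)).card := by
      rw [himg, hOrd.1, Finset.card_univ]
      simp only [Fintype.card_sum, Fintype.card_fin]
      omega
    have hinjOn := Finset.card_image_iff.mp hcards
    intro a b hab
    exact hinjOn (Finset.mem_coe.mpr (Finset.mem_univ a)) (Finset.mem_coe.mpr (Finset.mem_univ b)) hab
  -- the last edge p₀
  rcases hE : f (Sum.inl (⟨0, hk⟩ : Fin k)) with u | p₀
  · exfalso
    have huD : (Sum.inl u : MCol k) ∈ D := by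
      have := hfD (Sum.inl (⟨0, hk⟩ : Fin k)); rwa [hE] at this
    by_cases hu : u = Sum.inl (⟨0, hk⟩ : Fin k)
    · rw [hu] at huD; exact hl1notD huD
    · have h1 := (hXLr (Sum.inl (⟨0, hk⟩ : Fin k)) u (fun h => hu h.symm)).1
      have h2 : C (Sum.inl (⟨0, hk⟩ : Fin k)) (f (Sum.inl (⟨0, hk⟩ : Fin k))) ≤ (k : ℤ) ^ 2 :=
        le_trans (Finset.le_inf' hne _ (fun b hb => hfmin _ b hb)) hL.2
      rw [hE] at h2
      linarith
  · have hp₀D : (Sum.inr p₀ : MCol k) ∈ D := by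
      have := hfD (Sum.inl (⟨0, hk⟩ : Fin k)); rwa [hE] at this
    have hp₀min : ∀ c ∈ D,
        C (Sum.inl (⟨0, hk⟩ : Fin k)) (Sum.inr p₀) ≤ C (Sum.inl (⟨0, hk⟩ : Fin k)) c := by
      intro c hc
      have := hfmin (Sum.inl (⟨0, hk⟩ : Fin k)) c hc; rwa [hE] at this
    have hp₀ninc : ¬ MInc (Sum.inl (⟨0, hk⟩ : Fin k)) (Sum.inr p₀) := hnot _ hp₀D
    have hp₀1 : p₀.1 ≠ (⟨0, hk⟩ : Fin k) := by
      intro h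
      exact hp₀ninc (Or.inl (by rw [h]))
    have hmax : ∀ q : Fin k × Fin k, (Sum.inr q : MCol k) ∈ D →
        MColIndex k C (Sum.inr q) ≤ MColIndex k C (Sum.inr p₀) := by
      intro q hq
      by_contra hgt
      push_neg at hgt
      have h1 := hLord (Sum.inl (⟨0, hk⟩ : Fin k)) p₀ q hp₀ninc (hnot _ hq) hgt
      have h2 := hp₀min _ hq
      linarith
    have cover : ∀ v : MVert k, v ≠ Sum.inl (⟨0, hk⟩ : Fin k) → ∃ c ∈ D, MInc v c := by
      intro v hv
      by_contra hno
      push_neg at hno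
      have h1 := hFeas.2.2.2.2 v
      have h0 : (∑ e : MCol k, MA k v e * x e) = 0 := by
        apply Finset.sum_eq_zero
        intro e _
        by_cases heB : e ∈ B
        · rcases hBsub e heB with rfl | heD
          · have hz : MA k v (Sum.inl (Sum.inl (⟨0, hk⟩ : Fin k))) = 0 :=
              MA_of_not_inc (by exact hv)
            rw [hz, zero_mul]
          · rw [MA_of_not_inc (hno e heD), zero_mul]
        · rw [hFeas.2.2.2.1 e heB, mul_zero]
      rw [h0] at h1
      exact one_ne_zero h1.symm
    have hm1ne : (Sum.inl p₀.1 : MVert k) ≠ Sum.inl (⟨0, hk⟩ : Fin k) := by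
      intro h
      exact hp₀1 (Sum.inl_injective h)
    have hiloop : (Sum.inl (Sum.inl p₀.1) : MCol k) ∈ D := by
      by_contra hni
      obtain ⟨c, hcD, hcinc⟩ := cover (Sum.inl p₀.1) hm1ne
      have hedge : ∃ q : Fin k × Fin k, (Sum.inr q : MCol k) ∈ D ∧ q.1 = p₀.1 := by
        cases c with
        | inl u =>
          have h : (Sum.inl p₀.1 : MVert k) = u := hcinc
          rw [← h] at hcD
          exact absurd hcD hni
        | inr q =>
          rcases hcinc with h | h
          · exact ⟨q, hcD, (Sum.inl_injective h).symm⟩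
          · exact absurd h (by simp)
      obtain ⟨q, hqD, hq1⟩ := hedge
      have hle : C (Sum.inl p₀.1) (f (Sum.inl p₀.1)) ≤ (k : ℤ) :=
        le_trans (hfmin _ _ hqD) (hMr (Sum.inl p₀.1) q (Or.inl (by rw [hq1]))).2
      rcases hF : f (Sum.inl p₀.1) with u | r
      · rw [hF] at hle
        have huD : (Sum.inl u : MCol k) ∈ D := by
          have := hfD (Sum.inl p₀.1); rwa [hF] at this
        by_cases hu : u = Sum.inl p₀.1
        · rw [hu] at huD; exact hni huD
        · have h1 := (hXLr (Sum.inl p₀.1) u (fun hh => hu hh.symm)).1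
          nlinarith
      · rw [hF] at hle
        have hrD : (Sum.inr r : MCol k) ∈ D := by
          have := hfD (Sum.inl p₀.1); rwa [hF] at this
        have hrinc : MInc (Sum.inl p₀.1 : MVert k) (Sum.inr r) := by
          by_contra hncr
          have h1 := (hLr (Sum.inl p₀.1) r hncr).1
          linarith
        have hr1 : r.1 = p₀.1 := by
          rcases hrinc with h | h
          · exact (Sum.inl_injective h).symm
          · exact absurd h (by simp)
        have hrne : r ≠ p₀ := by
          intro h
          apply hm1ne
          apply hfinj
          rw [hF, hE, h]
        have hlt2 : MColIndex k C (Sum.inr r) < MColIndex k C (Sum.inr p₀) :=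
          lt_of_le_of_ne (hmax r hrD) (fun h => hrne (idx_inj hM h))
        have hval := @val_lt_of_idx_lt_same k C hM r p₀ hr1.symm hlt2
        rw [hr1] at hval
        have h5 := hfmin (Sum.inl p₀.1) (Sum.inr p₀) hp₀D
        rw [hF] at h5
        linarith
    refine ⟨p₀.1, hp₀1, ⟨hiloop, p₀, rfl, hp₀D⟩, ?_, ?_, hnot⟩
    · -- men strictly between m₁ and the separator
      intro i' h0 hlt
      have hne' : (Sum.inl i' : MVert k) ≠ Sum.inl (⟨0, hk⟩ : Fin k) := by
        intro h
        have h2 := Sum.inl_injective h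
        rw [h2] at h0
        simp at h0
      have hnl : (Sum.inl (Sum.inl i') : MCol k) ∉ D := by
        intro hcon
        have hW : ∀ b : Fin k, (Sum.inl (Sum.inr b) : MCol k) ∉ D := by
          intro b hb
          obtain ⟨v, hv⟩ := hOrd.2 (Sum.inr (i', b))
          have hMi : MInc (Sum.inl i' : MVert k) (Sum.inr ((i', b) : Fin k × Fin k)) :=
            Or.inl rfl
          have hMb : MInc (Sum.inr b : MVert k) (Sum.inr ((i', b) : Fin k × Fin k)) :=
            Or.inr rfl
          by_cases hvj : v = Sum.inl i'
          · subst hvj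
            have h1 := hv _ hcon
            rw [hloop0 (Sum.inl i')] at h1
            have h2 := (hMr _ _ hMi).1
            linarith
          · by_cases hvb : v = Sum.inr b
            · subst hvb
              have h1 := hv _ hb
              rw [hloop0 (Sum.inr b)] at h1
              have h2 := (hMr _ _ hMb).1
              linarith
            · have hninc : ¬ MInc v (Sum.inr ((i', b) : Fin k × Fin k)) := by
                rintro (h | h)
                · exact hvj h
                · exact hvb h
              have h1 := (hLr v _ hninc).1
              have h2 := hv _ hp₀D
              by_cases hvp : MInc v (Sum.inr p₀)
              · have h3 := (hMr v p₀ hvp).2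
                linarith
              · have hidx : MColIndex k C (Sum.inr ((i', b) : Fin k × Fin k))
                    < MColIndex k C (Sum.inr p₀) := idx_lt_of_fst_lt hM hlt
                have h3 := hLord v (i', b) p₀ hninc hvp hidx
                linarith
        exact no_early_loop k hk D B x hFeas hBsub hnot hW
      refine ⟨hnl, ?_⟩
      obtain ⟨c, hcD, hcinc⟩ := cover (Sum.inl i') hne'
      cases c with
      | inl u =>
        have h : (Sum.inl i' : MVert k) = u := hcinc
        rw [← h] at hcD
        exact absurd hcD hnl
      | inr q =>
        rcases hcinc with h | h
        · exact ⟨q, (Sum.inl_injective h).symm, hcD⟩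
        · exact absurd h (by simp)
    · -- men after the separator
      intro i' hgt
      have hne' : (Sum.inl i' : MVert k) ≠ Sum.inl (⟨0, hk⟩ : Fin k) := by
        intro h
        have h2 := Sum.inl_injective h
        rw [h2] at hgt
        simp at hgt
      have hnoedge : ∀ p : Fin k × Fin k, (Sum.inr p : MCol k) ∈ D → p.1 ≠ i' := by
        intro p hp h1
        have h2 := hmax p hp
        have h3 : MColIndex k C (Sum.inr p₀) < MColIndex k C (Sum.inr p) :=
          idx_lt_of_fst_lt hM (by rw [h1]; exact hgt)
        omega
      refine ⟨?_, hnoedge⟩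
      obtain ⟨c, hcD, hcinc⟩ := cover (Sum.inl i') hne'
      cases c with
      | inl u =>
        have h : (Sum.inl i' : MVert k) = u := hcinc
        rw [← h] at hcD
        exact hcD
      | inr q =>
        rcases hcinc with h | h
        · exact absurd ((Sum.inl_injective h).symm) (hnoedge q hcD)
        · exact absurd h (by simp)
end

section
/- Let B be a feasible basis of the perturbed bipartite matching polytope {x ≥ 0 : Ax = b + b(ε)}, where b is the all-ones vector and b(ε) = (ε^{k+1},…,ε^{2k}, ε, ε², …, ε^k) with men's coordinates listed first, for ε small enough that the perturbed polytope is nondegenerate and every feasible basis of the perturbed polytope is feasible for the original. Then in the forest-with-single-loops graph G_B of B, every leaf of any tree component (a non-root vertex of degree 1) is a man, and every woman has degree 1 or 2 in her tree component. -/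
open Finset

instance {k : ℕ} (v : MVert k) (e : MCol k) : Decidable (MInc v e) :=
  match e with
  | Sum.inl u => inferInstanceAs (Decidable (v = u))
  | Sum.inr p => inferInstanceAs (Decidable (v = Sum.inl p.1 ∨ v = Sum.inr p.2))

/-- Degree of a vertex in the graph `G_B`: the number of columns of `B`
(valid edges and loops) incident to it. -/
def MDeg (k : ℕ) (B : Finset (MCol k)) (v : MVert k) : ℕ :=
  (B.filter (fun e => MInc v e)).card

/-- The perturbation `b(ε) = (ε^{k+1},…,ε^{2k}, ε, ε², …, ε^k)`, men first. -/
def bpert (k : ℕ) (ε : ℚ) : MVert k → ℚ := fun v =>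
  match v with
  | Sum.inl i => ε ^ (k + 1 + i.val)
  | Sum.inr j => ε ^ (j.val + 1)

def colV (k : ℕ) (e : MCol k) : MVert k → ℚ := fun v => MA k v e

def fsign {k : ℕ} (v : MVert k) : ℚ := Sum.elim (fun _ => 1) (fun _ => -1) v

def phi (k : ℕ) (a : MVert k) : MVert k → ℚ := fun u => if u = a then fsign a else 0

lemma col_edge (k : ℕ) (p : Fin k × Fin k) :
    colV k (Sum.inr p) = phi k (Sum.inl p.1) - phi k (Sum.inr p.2) := by
  funext u
  simp only [colV, MA, phi, Pi.sub_apply, fsign, Sum.elim_inl, Sum.elim_inr]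
  by_cases h1 : u = Sum.inl p.1
  · subst h1; simp
  · by_cases h2 : u = Sum.inr p.2
    · subst h2; simp [h1]
    · simp [h1, h2]

lemma col_loop (k : ℕ) (v : MVert k) :
    colV k (Sum.inl v) = fsign v • phi k v := by
  funext u
  simp only [colV, MA, phi, Pi.smul_apply, smul_eq_mul]
  by_cases h : u = v
  · subst h; cases u <;> simp [fsign]
  · simp [h]

-- adjacency avoiding woman w
def adjw (k : ℕ) (B : Finset (MCol k)) (w : Fin k) : MVert k → MVert k → Prop :=
  fun a b => ∃ p : Fin k × Fin k, Sum.inr p ∈ B ∧ p.2 ≠ w ∧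
    ((a = Sum.inl p.1 ∧ b = Sum.inr p.2) ∨ (b = Sum.inl p.1 ∧ a = Sum.inr p.2))

def Reach (k : ℕ) (B : Finset (MCol k)) (w : Fin k) : MVert k → MVert k → Prop :=
  Relation.ReflTransGen (adjw k B w)

lemma adjw_symm {k : ℕ} {B : Finset (MCol k)} {w : Fin k} : Symmetric (adjw k B w) := by
  intro a b ⟨p, h1, h2, h3⟩
  exact ⟨p, h1, h2, h3.symm⟩

lemma reach_symm {k : ℕ} {B : Finset (MCol k)} {w : Fin k} {a b : MVert k}
    (h : Reach k B w a b) : Reach k B w b a :=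
  h.swap.lift id (fun _ _ hab => adjw_symm hab)

lemma adjw_ne_w {k : ℕ} {B : Finset (MCol k)} {w : Fin k} (a : MVert k) :
    ¬ adjw k B w a (Sum.inr w) := by
  rintro ⟨p, _, hpw, hcase⟩
  rcases hcase with ⟨_, h⟩ | ⟨h, _⟩
  · exact hpw (Sum.inr.inj h.symm)
  · exact absurd h (by simp)

lemma reach_ne_w {k : ℕ} {B : Finset (MCol k)} {w : Fin k} {a : MVert k}
    (hne : a ≠ Sum.inr w) (h : Reach k B w a (Sum.inr w)) : False := by
  rcases (Relation.ReflTransGen.cases_tail h) with heq | ⟨b, _, hadj⟩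
  · exact hne heq.symm
  · exact adjw_ne_w _ hadj

lemma path_combo {k : ℕ} {B : Finset (MCol k)} {w : Fin k} {a b : MVert k}
    (h : Reach k B w a b) :
    ∃ c : Fin k × Fin k → ℚ,
      (∀ p, c p ≠ 0 → Sum.inr p ∈ B ∧ p.2 ≠ w ∧ Reach k B w a (Sum.inl p.1)) ∧
      ∑ p : Fin k × Fin k, c p • colV k (Sum.inr p) = phi k a - phi k b := by
  induction h with
  | refl => exact ⟨0, fun p hp => absurd rfl hp, by simp⟩
  | @tail b' c' hab hbc ih =>
    obtain ⟨c, hsupp, hsum⟩ := ih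
    obtain ⟨p, hpB, hpw, hcase⟩ := hbc
    -- sign
    have hreach1 : Reach k B w a (Sum.inl p.1) := by
      rcases hcase with ⟨h1, _⟩ | ⟨_, h2⟩
      · exact h1 ▸ hab
      · exact hab.tail ⟨p, hpB, hpw, Or.inr ⟨rfl, h2⟩⟩
    rcases hcase with ⟨h1, h2⟩ | ⟨h1, h2⟩
    · -- b' = inl p.1, c' = inr p.2 : phi b' - phi c' = colV (inr p)
      refine ⟨fun q => c q + (if q = p then 1 else 0), ?_, ?_⟩
      · intro q hq
        by_cases hqp : q = p
        · exact hqp ▸ ⟨hpB, hpw, hreach1⟩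
        · simp only [hqp, if_neg, ite_false, add_zero] at hq
          exact hsupp q hq
      · have : ∑ q : Fin k × Fin k, (if q = p then (1:ℚ) else 0) • colV k (Sum.inr q)
            = colV k (Sum.inr p) := by
          rw [Fintype.sum_eq_single p ?_]
          · simp
          · intro q hq; simp [hq]
        simp only [add_smul, Finset.sum_add_distrib]
        rw [hsum, this, col_edge k p, h1, h2]; abel
    · -- c' = inl p.1, b' = inr p.2 : phi b' - phi c' = -(colV (inr p))
      refine ⟨fun q => c q + (if q = p then -1 else 0), ?_, ?_⟩
      · intro q hq
        by_cases hqp : q = p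
        · exact hqp ▸ ⟨hpB, hpw, hreach1⟩
        · simp only [hqp, if_neg, ite_false, add_zero] at hq
          exact hsupp q hq
      · have : ∑ q : Fin k × Fin k, (if q = p then (-1:ℚ) else 0) • colV k (Sum.inr q)
            = -colV k (Sum.inr p) := by
          rw [Fintype.sum_eq_single p ?_]
          · simp
          · intro q hq; simp [hq]
        simp only [add_smul, Finset.sum_add_distrib]
        rw [hsum, this, col_edge k p, h1, h2]; abel

lemma dep_contra {k : ℕ} {B : Finset (MCol k)}
    (hli : LinearIndependent ℚ (fun j : B => fun v : MVert k => MA k v (j : MCol k)))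
    (g : MCol k → ℚ) (hsupp : ∀ e, g e ≠ 0 → e ∈ B)
    (hsum : ∑ e : MCol k, g e • colV k e = 0)
    (e0 : MCol k) (h0 : g e0 ≠ 0) : False := by
  have hB0 : e0 ∈ B := hsupp e0 h0
  have key : ∑ j : B, g (j : MCol k) • colV k (j : MCol k) = 0 := by
    rw [Finset.univ_eq_attach, Finset.sum_attach B (fun e => g e • colV k e)]
    rw [← hsum]
    apply Finset.sum_subset (Finset.subset_univ B)
    intro e _ heB
    have : g e = 0 := by by_contra hg; exact heB (hsupp e hg)
    simp [this]
  have := Fintype.linearIndependent_iff.mp hli (fun j => g (j : MCol k)) key ⟨e0, hB0⟩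
  exact h0 this

lemma sum_single_smul {ι M : Type*} [Fintype ι] [DecidableEq ι] [AddCommMonoid M] [Module ℚ M]
    (f : ι → M) (p : ι) (a : ℚ) :
    ∑ q : ι, (if q = p then a else 0) • f q = a • f p := by
  rw [Fintype.sum_eq_single p]
  · simp
  · intro q hq; simp [hq]

lemma fsign_sq {k : ℕ} (v : MVert k) : fsign v * fsign v = 1 := by
  cases v <;> simp [fsign]

def Loopy (k : ℕ) (B : Finset (MCol k)) (w : Fin k) (m : Fin k) : Prop :=
  ∃ v : MVert k, Reach k B w (Sum.inl m) v ∧ (Sum.inl v : MCol k) ∈ B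

lemma dep1 {k : ℕ} {B : Finset (MCol k)}
    (hli : LinearIndependent ℚ (fun j : B => fun v : MVert k => MA k v (j : MCol k)))
    {w m m' : Fin k} (hm : (Sum.inr (m, w) : MCol k) ∈ B) (hm' : (Sum.inr (m', w) : MCol k) ∈ B)
    (hne : m ≠ m') (hr : Reach k B w (Sum.inl m) (Sum.inl m')) : False := by
  obtain ⟨c, hsupp, hsum⟩ := path_combo hr
  have hcm : c (m, w) = 0 := by
    by_contra h; exact (hsupp _ h).2.1 rfl
  have hcm' : c (m', w) = 0 := by
    by_contra h; exact (hsupp _ h).2.1 rfl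
  apply dep_contra hli
    (Sum.elim (fun _ => 0)
      (fun q => (if q = (m, w) then -1 else 0) + (if q = (m', w) then 1 else 0) + c q))
    ?_ ?_ (Sum.inr (m, w)) ?_
  · rintro (u | q) hg
    · simp at hg
    · simp only [Sum.elim_inr] at hg
      by_cases h1 : q = (m, w)
      · exact h1 ▸ hm
      by_cases h2 : q = (m', w)
      · exact h2 ▸ hm'
      · simp only [h1, h2, if_neg, ite_false, zero_add, add_zero] at hg
        exact (hsupp q hg).1
  · rw [Fintype.sum_sum_type]
    simp only [Sum.elim_inl, Sum.elim_inr, zero_smul, Finset.sum_const_zero, zero_add,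
      add_smul, Finset.sum_add_distrib, sum_single_smul, hsum]
    rw [col_edge k (m, w), col_edge k (m', w)]
    module
  · have hne2 : ((m, w) : Fin k × Fin k) ≠ (m', w) := fun h => hne (congrArg Prod.fst h)
    simp only [Sum.elim_inr, if_pos rfl, if_neg hne2, hcm]
    norm_num

lemma dep2 {k : ℕ} {B : Finset (MCol k)}
    (hli : LinearIndependent ℚ (fun j : B => fun v : MVert k => MA k v (j : MCol k)))
    {w m m' : Fin k} (hm : (Sum.inr (m, w) : MCol k) ∈ B) (hm' : (Sum.inr (m', w) : MCol k) ∈ B)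
    (hne : m ≠ m') (hl : Loopy k B w m) (hl' : Loopy k B w m') : False := by
  obtain ⟨v, hrv, hvB⟩ := hl
  obtain ⟨v', hrv', hvB'⟩ := hl'
  obtain ⟨c, hsupp, hsum⟩ := path_combo hrv
  obtain ⟨c', hsupp', hsum'⟩ := path_combo hrv'
  have hcm : c (m, w) = 0 := by by_contra h; exact (hsupp _ h).2.1 rfl
  have hcm' : c' (m, w) = 0 := by by_contra h; exact (hsupp' _ h).2.1 rfl
  apply dep_contra hli
    (Sum.elim (fun u => (if u = v then -(fsign v) else 0) + (if u = v' then fsign v' else 0))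
      (fun q => (if q = (m, w) then 1 else 0) + (if q = (m', w) then -1 else 0) + (- c q) + c' q))
    ?_ ?_ (Sum.inr (m, w)) ?_
  · rintro (u | q) hg
    · simp only [Sum.elim_inl] at hg
      by_cases h1 : u = v
      · exact h1 ▸ hvB
      by_cases h2 : u = v'
      · exact h2 ▸ hvB'
      · simp [h1, h2] at hg
    · simp only [Sum.elim_inr] at hg
      by_cases h1 : q = (m, w)
      · exact h1 ▸ hm
      by_cases h2 : q = (m', w)
      · exact h2 ▸ hm'
      · simp only [h1, h2, if_neg, ite_false, zero_add, add_zero] at hg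
        rcases (by by_contra hcon; push_neg at hcon; simp [hcon.1, hcon.2] at hg :
          c q ≠ 0 ∨ c' q ≠ 0) with h | h
        · exact (hsupp q h).1
        · exact (hsupp' q h).1
  · rw [Fintype.sum_sum_type]
    simp only [Sum.elim_inl, Sum.elim_inr, add_smul, neg_smul, Finset.sum_add_distrib,
      Finset.sum_neg_distrib, sum_single_smul, hsum, hsum']
    rw [col_edge k (m, w), col_edge k (m', w), col_loop k v, col_loop k v']
    simp only [smul_smul, fsign_sq]
    module
  · have hne2 : ((m, w) : Fin k × Fin k) ≠ (m', w) := fun h => hne (congrArg Prod.fst h)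
    simp only [Sum.elim_inr, if_pos rfl, if_neg hne2, hcm, hcm']
    norm_num

lemma dep3 {k : ℕ} {B : Finset (MCol k)}
    (hli : LinearIndependent ℚ (fun j : B => fun v : MVert k => MA k v (j : MCol k)))
    {w m : Fin k} (hm : (Sum.inr (m, w) : MCol k) ∈ B)
    (hloopw : (Sum.inl (Sum.inr w) : MCol k) ∈ B) (hl : Loopy k B w m) : False := by
  obtain ⟨v, hrv, hvB⟩ := hl
  obtain ⟨c, hsupp, hsum⟩ := path_combo hrv
  have hcm : c (m, w) = 0 := by by_contra h; exact (hsupp _ h).2.1 rfl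
  have hvw : v ≠ Sum.inr w := by
    rintro rfl; exact reach_ne_w (by simp) hrv
  apply dep_contra hli
    (Sum.elim (fun u => (if u = Sum.inr w then 1 else 0) + (if u = v then fsign v else 0))
      (fun q => (if q = (m, w) then -1 else 0) + c q))
    ?_ ?_ (Sum.inl (Sum.inr w)) ?_
  · rintro (u | q) hg
    · simp only [Sum.elim_inl] at hg
      by_cases h1 : u = Sum.inr w
      · exact h1 ▸ hloopw
      by_cases h2 : u = v
      · exact h2 ▸ hvB
      · simp [h1, h2] at hg
    · simp only [Sum.elim_inr] at hg
      by_cases h1 : q = (m, w)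
      · exact h1 ▸ hm
      · simp only [h1, if_neg, ite_false, zero_add] at hg
        exact (hsupp q hg).1
  · rw [Fintype.sum_sum_type]
    simp only [Sum.elim_inl, Sum.elim_inr, add_smul, neg_smul, Finset.sum_add_distrib,
      sum_single_smul, hsum]
    rw [col_edge k (m, w), col_loop k v, col_loop k (Sum.inr w)]
    simp only [smul_smul, fsign_sq, one_mul]
    have h1 : fsign (Sum.inr w : MVert k) = -1 := rfl
    rw [h1]
    module
  · simp only [Sum.elim_inl, if_pos rfl, if_neg hvw.symm]
    norm_num

open scoped Classical in
lemma cut_eq {k : ℕ} {B : Finset (MCol k)} {w m : Fin k}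
    (y : MCol k → ℚ) (r : MVert k → ℚ)
    (hy0 : ∀ j ∉ B, y j = 0)
    (hyc : ∀ v : MVert k, ∑ e : MCol k, MA k v e * y e = r v)
    (hnl : ∀ v, Reach k B w (Sum.inl m) v → (Sum.inl v : MCol k) ∉ B) :
    ∑ a : Fin k, (if Reach k B w (Sum.inl m) (Sum.inl a) then y (Sum.inr (a, w)) else 0)
      = ∑ v : MVert k, (if Reach k B w (Sum.inl m) v then fsign v * r v else 0) := by
  set P : MVert k → Prop := Reach k B w (Sum.inl m) with hP
  have hPw : ¬ P (Sum.inr w) := fun h => reach_ne_w (by simp) h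
  have key : ∀ v, (if P v then fsign v * r v else 0)
      = ∑ e : MCol k, (if P v then fsign v * MA k v e else 0) * y e := by
    intro v
    by_cases h : P v
    · rw [if_pos h, ← hyc v, Finset.mul_sum]
      exact Finset.sum_congr rfl (fun e _ => by rw [if_pos h, mul_assoc])
    · simp [h]
  rw [Finset.sum_congr rfl (fun v _ => key v), Finset.sum_comm]
  rw [Fintype.sum_sum_type]
  -- loop part is zero
  have hloop : ∀ u : MVert k,
      (∑ v : MVert k, (if P v then fsign v * MA k v (Sum.inl u) else 0) * y (Sum.inl u)) = 0 := by
    intro u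
    by_cases hPu : P u
    · rw [← Finset.sum_mul, hy0 _ (hnl u hPu), mul_zero]
    · have hz : ∀ v : MVert k, (if P v then fsign v * MA k v (Sum.inl u) else 0) = 0 := by
        intro v
        by_cases hpv : P v
        · rw [if_pos hpv]
          have : MA k v (Sum.inl u) = 0 := by
            dsimp [MA]
            rw [if_neg (fun h : v = u => hPu (h ▸ hpv))]
          rw [this, mul_zero]
        · rw [if_neg hpv]
      simp [hz]
  rw [Finset.sum_congr rfl (fun u _ => hloop u), Finset.sum_const_zero, zero_add]
  -- edge part
  have hedge : ∀ p : Fin k × Fin k,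
      (∑ v : MVert k, (if P v then fsign v * MA k v (Sum.inr p) else 0) * y (Sum.inr p))
      = if p.2 = w ∧ P (Sum.inl p.1) then y (Sum.inr p) else 0 := by
    intro p
    rw [← Finset.sum_mul]
    have hsplit : ∀ v : MVert k, (if P v then fsign v * MA k v (Sum.inr p) else 0)
        = (if v = Sum.inl p.1 then (if P v then fsign v else 0) else 0)
          + (if v = Sum.inr p.2 then (if P v then fsign v else 0) else 0) := by
      intro v
      by_cases h1 : v = Sum.inl p.1
      · subst h1
        rw [if_pos rfl, if_neg (Sum.inl_ne_inr), add_zero]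
        by_cases hpv : P (Sum.inl p.1) <;> simp [hpv, MA]
      · by_cases h2 : v = Sum.inr p.2
        · subst h2
          rw [if_neg h1, if_pos rfl, zero_add]
          by_cases hpv : P (Sum.inr p.2) <;> simp [hpv, MA, h1]
        · rw [if_neg h1, if_neg h2, add_zero]
          have : MA k v (Sum.inr p) = 0 := by
            dsimp [MA]; rw [if_neg (by tauto)]
          by_cases hpv : P v <;> simp [hpv, this]
    rw [Finset.sum_congr rfl (fun v _ => hsplit v), Finset.sum_add_distrib,
      Finset.sum_ite_eq' Finset.univ (Sum.inl p.1 : MVert k),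
      Finset.sum_ite_eq' Finset.univ (Sum.inr p.2 : MVert k)]
    simp only [Finset.mem_univ, if_true]
    by_cases hw : p.2 = w
    · subst hw
      rw [if_neg hPw, add_zero]
      by_cases hp1 : P (Sum.inl p.1)
      · simp [hp1, fsign]
      · simp [hp1]
    · -- p.2 ≠ w : coefficient vanishes or y vanishes
      by_cases hpB : (Sum.inr p : MCol k) ∈ B
      · have hiff : P (Sum.inl p.1) ↔ P (Sum.inr p.2) := by
          constructor
          · intro h; exact h.tail ⟨p, hpB, hw, Or.inl ⟨rfl, rfl⟩⟩
          · intro h; exact h.tail ⟨p, hpB, hw, Or.inr ⟨rfl, rfl⟩⟩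
        by_cases hp1 : P (Sum.inl p.1)
        · rw [if_pos hp1, if_pos (hiff.mp hp1)]
          simp [fsign, hw]
        · rw [if_neg hp1, if_neg (fun h => hp1 (hiff.mpr h))]
          simp [hw]
      · rw [hy0 _ hpB, mul_zero, if_neg (by tauto)]
  rw [Finset.sum_congr rfl (fun p _ => hedge p), Fintype.sum_prod_type]
  refine Finset.sum_congr rfl (fun a _ => ?_)
  have : ∀ b : Fin k, (if (a, b).2 = w ∧ P (Sum.inl (a, b).1) then y (Sum.inr (a, b)) else 0)
      = if b = w then (if P (Sum.inl a) then y (Sum.inr (a, b)) else 0) else 0 := by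
    intro b
    by_cases hb : b = w <;> by_cases hp : P (Sum.inl a) <;> simp [hb, hp]
  rw [Finset.sum_congr rfl (fun b _ => this b), Finset.sum_ite_eq' Finset.univ w]
  simp

open scoped Classical in
lemma zcut_ge_one {k : ℕ} {B : Finset (MCol k)} {w m : Fin k} {ε : ℚ}
    (hε0 : 0 < ε) (hε1 : ε < 1)
    (x z : MCol k → ℚ)
    (hxB : ∀ j ∉ B, x j = 0)
    (hxc : ∀ v : MVert k, ∑ e : MCol k, MA k v e * x e = 1 + bpert k ε v)
    (hx0 : ∀ j, 0 ≤ x j)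
    (hxm : 0 < x (Sum.inr (m, w)))
    (hzB : ∀ j ∉ B, z j = 0)
    (hzc : ∀ v : MVert k, ∑ e : MCol k, MA k v e * z e = 1)
    (hnl : ∀ v, Reach k B w (Sum.inl m) v → (Sum.inl v : MCol k) ∉ B) :
    1 ≤ ∑ a : Fin k, (if Reach k B w (Sum.inl m) (Sum.inl a) then z (Sum.inr (a, w)) else 0) := by
  set P : MVert k → Prop := Reach k B w (Sum.inl m) with hP
  have hPm : P (Sum.inl m) := Relation.ReflTransGen.refl
  set Mq : ℚ := ∑ i : Fin k, (if P (Sum.inl i) then (1:ℚ) else 0) with hMq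
  set Wq : ℚ := ∑ j : Fin k, (if P (Sum.inr j) then (1:ℚ) else 0) with hWq
  -- z cut
  have hzcut := cut_eq z (fun _ => 1) hzB hzc hnl
  have hzS : ∑ a : Fin k, (if P (Sum.inl a) then z (Sum.inr (a, w)) else 0) = Mq - Wq := by
    rw [hzcut, Fintype.sum_sum_type]
    have h1 : ∀ i : Fin k, (if P (Sum.inl i) then fsign (Sum.inl i : MVert k) * 1 else 0)
        = (if P (Sum.inl i) then (1:ℚ) else 0) := by
      intro i; by_cases h : P (Sum.inl i) <;> simp [h, fsign]
    have h2 : ∀ j : Fin k, (if P (Sum.inr j) then fsign (Sum.inr j : MVert k) * 1 else 0)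
        = -(if P (Sum.inr j) then (1:ℚ) else 0) := by
      intro j; by_cases h : P (Sum.inr j) <;> simp [h, fsign]
    rw [Finset.sum_congr rfl (fun i _ => h1 i), Finset.sum_congr rfl (fun j _ => h2 j)]
    rw [Finset.sum_neg_distrib]
    show Mq + -Wq = Mq - Wq
    ring
  -- x cut
  have hxcut := cut_eq x (fun v => 1 + bpert k ε v) hxB hxc hnl
  set TM : ℚ := ∑ i : Fin k, (if P (Sum.inl i) then ε ^ (k + 1 + i.val) else 0) with hTM
  set TW : ℚ := ∑ j : Fin k, (if P (Sum.inr j) then ε ^ (j.val + 1) else 0) with hTW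
  have hxS : ∑ a : Fin k, (if P (Sum.inl a) then x (Sum.inr (a, w)) else 0)
      = (Mq - Wq) + (TM - TW) := by
    rw [hxcut, Fintype.sum_sum_type]
    have h1 : ∀ i : Fin k, (if P (Sum.inl i) then fsign (Sum.inl i : MVert k) * (1 + bpert k ε (Sum.inl i)) else 0)
        = (if P (Sum.inl i) then (1:ℚ) else 0) + (if P (Sum.inl i) then ε ^ (k + 1 + i.val) else 0) := by
      intro i; by_cases h : P (Sum.inl i) <;> simp [h, fsign, bpert]
    have h2 : ∀ j : Fin k, (if P (Sum.inr j) then fsign (Sum.inr j : MVert k) * (1 + bpert k ε (Sum.inr j)) else 0)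
        = -((if P (Sum.inr j) then (1:ℚ) else 0) + (if P (Sum.inr j) then ε ^ (j.val + 1) else 0)) := by
      intro j
      by_cases h : P (Sum.inr j)
      · simp only [h, if_true, fsign, Sum.elim_inr, bpert]; ring
      · simp [h]
    rw [Finset.sum_congr rfl (fun i _ => h1 i), Finset.sum_congr rfl (fun j _ => h2 j)]
    rw [Finset.sum_neg_distrib, Finset.sum_add_distrib, Finset.sum_add_distrib]
    show (Mq + TM) + -(Wq + TW) = Mq - Wq + (TM - TW)
    ring
  -- positivity of x cut
  have hxpos : 0 < ∑ a : Fin k, (if P (Sum.inl a) then x (Sum.inr (a, w)) else 0) := by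
    apply Finset.sum_pos'
    · intro i _
      by_cases h : P (Sum.inl i) <;> simp [h, hx0]
    · exact ⟨m, Finset.mem_univ m, by rw [if_pos hPm]; exact hxm⟩
  -- bounds on TM, TW
  have hMq0 : 0 ≤ Mq := by
    apply Finset.sum_nonneg; intro i _; by_cases h : P (Sum.inl i) <;> simp [h]
  have hTM : TM ≤ Mq * ε ^ (k + 1) := by
    rw [hMq, Finset.sum_mul]
    apply Finset.sum_le_sum
    intro i _
    by_cases h : P (Sum.inl i)
    · simp only [h, if_true, one_mul]
      exact pow_le_pow_of_le_one hε0.le hε1.le (by omega)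
    · simp [h]
  have hTW : Wq * ε ^ k ≤ TW := by
    rw [hWq, Finset.sum_mul]
    apply Finset.sum_le_sum
    intro j _
    by_cases h : P (Sum.inr j)
    · simp only [h, if_true, one_mul]
      exact pow_le_pow_of_le_one hε0.le hε1.le (by omega)
    · simp [h]
  -- conclude Mq > Wq
  have hgt : Wq < Mq := by
    by_contra hle
    push_neg at hle
    have h1 : (Mq - Wq) + (TM - TW) ≤ 0 := by
      have e1 : TM - TW ≤ Mq * ε ^ (k+1) - Mq * ε ^ k := by
        have : Wq * ε ^ k ≥ Mq * ε ^ k :=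
          mul_le_mul_of_nonneg_right hle (by positivity)
        linarith
      have e2 : Mq * ε ^ (k+1) - Mq * ε ^ k ≤ 0 := by
        have : ε ^ (k+1) ≤ ε ^ k := pow_le_pow_of_le_one hε0.le hε1.le (by omega)
        nlinarith
      linarith
    rw [hxS] at hxpos
    linarith
  -- integrality
  have hM' : Mq = ((Finset.univ.filter (fun i : Fin k => P (Sum.inl i))).card : ℚ) := by
    rw [hMq, Finset.sum_boole]
  have hW' : Wq = ((Finset.univ.filter (fun j : Fin k => P (Sum.inr j))).card : ℚ) := by
    rw [hWq, Finset.sum_boole]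
  have hge1 : 1 ≤ Mq - Wq := by
    rw [hM', hW'] at hgt ⊢
    have := Nat.cast_lt (α := ℚ).mp hgt
    have h2 : ((Finset.univ.filter (fun j : Fin k => P (Sum.inr j))).card : ℚ) + 1
        ≤ ((Finset.univ.filter (fun i : Fin k => P (Sum.inl i))).card : ℚ) := by
      exact_mod_cast Nat.succ_le_of_lt this
    linarith
  rw [hzS]
  exact hge1

lemma MA_nonneg (k : ℕ) (v : MVert k) (e : MCol k) : 0 ≤ MA k v e := by
  cases e <;> dsimp [MA] <;> split <;> norm_num

-- sum over incident B-columns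
lemma sum_incident {k : ℕ} (B : Finset (MCol k)) (y : MCol k → ℚ)
    (hy : ∀ j ∉ B, y j = 0) (v : MVert k) :
    ∑ e : MCol k, MA k v e * y e = ∑ e ∈ B.filter (fun e => MInc v e), y e := by
  have h1 : ∀ e : MCol k, MA k v e * y e = if MInc v e then y e else 0 := by
    intro e
    cases e with
    | inl u => dsimp [MA, MInc]; split <;> simp_all
    | inr p => dsimp [MA, MInc]; split <;> simp_all
  rw [Finset.sum_congr rfl (fun e _ => h1 e), Finset.sum_ite, Finset.sum_const_zero, add_zero]
  symm
  apply Finset.sum_subset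
  · intro e he; simp only [mem_filter] at he ⊢; exact ⟨mem_univ _, he.2⟩
  · intro e he hne
    simp only [mem_filter] at he hne
    exact hy e (fun hB => hne ⟨hB, he.2⟩)

/-- For a feasible basis `B` of the perturbed bipartite matching polytope
`{x ≥ 0 : Ax = 1 + b(ε)}`, with `ε` small enough that the perturbed polytope is
nondegenerate and every feasible basis of the perturbed polytope is feasible
for the original, every leaf of a tree component of `G_B` (a non-root vertex of
degree 1, i.e. a vertex of degree 1 whose loop is not in `B`) is a man, and
every woman has degree 1 or 2 in her tree component. -/
theorem perturbed_basis_leaf_is_man (k : ℕ) (ε : ℚ)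
    (hε : 0 < ε ∧ ε < 1)
    -- the perturbed polytope is nondegenerate:
    (hnondeg : ∀ (B' : Finset (MCol k)) (y : MCol k → ℚ),
      MFeasBasis k B' y (fun v => 1 + bpert k ε v) → ∀ j ∈ B', 0 < y j)
    -- every feasible basis of the perturbed polytope is feasible for the
    -- original polytope:
    (hcarry : ∀ (B' : Finset (MCol k)) (y : MCol k → ℚ),
      MFeasBasis k B' y (fun v => 1 + bpert k ε v) →
      ∃ z : MCol k → ℚ, MFeasBasis k B' z (fun _ => 1))
    (B : Finset (MCol k)) (x : MCol k → ℚ)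
    (hB : MFeasBasis k B x (fun v => 1 + bpert k ε v)) :
    (∀ v : MVert k, (Sum.inl v : MCol k) ∉ B → MDeg k B v = 1 →
      ∃ i : Fin k, v = Sum.inl i) ∧
    (∀ w : Fin k, 1 ≤ MDeg k B (Sum.inr w) ∧ MDeg k B (Sum.inr w) ≤ 2) := by
  classical
  obtain ⟨hε0, hε1⟩ := hε
  obtain ⟨hcard, hli, hx0, hxB, hxc⟩ := hB
  have hBfull : MFeasBasis k B x (fun v => 1 + bpert k ε v) := ⟨hcard, hli, hx0, hxB, hxc⟩
  constructor
  · -- every leaf is a man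
    rintro (i | w) hloop hdeg
    · exact ⟨i, rfl⟩
    · exfalso
      rw [MDeg, Finset.card_eq_one] at hdeg
      obtain ⟨e, he⟩ := hdeg
      have heF : e ∈ B.filter (fun e => MInc (Sum.inr w : MVert k) e) :=
        he ▸ Finset.mem_singleton_self e
      rw [Finset.mem_filter] at heF
      obtain ⟨heB, hinc⟩ := heF
      obtain ⟨p, rfl, hp2⟩ : ∃ p : Fin k × Fin k, e = Sum.inr p ∧ p.2 = w := by
        cases e with
        | inl u =>
          exfalso
          have hu : (Sum.inr w : MVert k) = u := hinc
          exact hloop (hu ▸ heB)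
        | inr p =>
          rcases hinc with h | h
          · exact absurd h (by simp)
          · exact ⟨p, rfl, (Sum.inr.inj h).symm⟩
      have hw := hxc (Sum.inr w)
      rw [sum_incident B x hxB, he, Finset.sum_singleton] at hw
      have hm := hxc (Sum.inl p.1)
      rw [sum_incident B x hxB] at hm
      dsimp only at hm
      have hmem : (Sum.inr p : MCol k) ∈ B.filter (fun e => MInc (Sum.inl p.1 : MVert k) e) := by
        rw [Finset.mem_filter]
        exact ⟨heB, Or.inl rfl⟩
      have hle : x (Sum.inr p) ≤ 1 + bpert k ε (Sum.inl p.1) := by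
        rw [← hm]
        exact Finset.single_le_sum (fun e _ => hx0 e) hmem
      have hpow : ε ^ (k + 1 + (p.1 : ℕ)) < ε ^ ((w : ℕ) + 1) :=
        pow_lt_pow_right_of_lt_one₀ hε0 hε1 (by omega)
      simp only [bpert] at hw hle
      linarith
  · intro w
    constructor
    · -- degree at least 1
      by_contra h
      push_neg at h
      rw [Nat.lt_one_iff, MDeg, Finset.card_eq_zero] at h
      have hw := hxc (Sum.inr w)
      rw [sum_incident B x hxB, h, Finset.sum_empty] at hw
      have : (0:ℚ) < ε ^ ((w:ℕ) + 1) := pow_pos hε0 _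
      simp only [bpert] at hw
      linarith
    · -- degree at most 2
      by_contra h
      push_neg at h
      have h3 : 3 ≤ MDeg k B (Sum.inr w) := h
      obtain ⟨z, hzfeas⟩ := hcarry B x hBfull
      obtain ⟨-, -, hz0, hzB, hzc⟩ := hzfeas
      set A : Finset (Fin k) :=
        Finset.univ.filter (fun a : Fin k => (Sum.inr (a, w) : MCol k) ∈ B) with hA
      have hAmem : ∀ a ∈ A, (Sum.inr (a, w) : MCol k) ∈ B := by
        intro a ha; rw [hA, Finset.mem_filter] at ha; exact ha.2
      have hFsub : B.filter (fun e => MInc (Sum.inr w : MVert k) e) ⊆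
          insert (Sum.inl (Sum.inr w) : MCol k)
            (A.image (fun a => (Sum.inr (a, w) : MCol k))) := by
        intro e he
        rw [Finset.mem_filter] at he
        obtain ⟨heB, hinc⟩ := he
        cases e with
        | inl u =>
          have hu : (Sum.inr w : MVert k) = u := hinc
          rw [← hu]
          exact Finset.mem_insert_self _ _
        | inr p =>
          rcases hinc with hcon | hcon
          · exact absurd hcon (by simp)
          · have hp2 : p.2 = w := (Sum.inr.inj hcon).symm
            have hp : p = (p.1, w) := by rw [← hp2]
            apply Finset.mem_insert_of_mem
            rw [Finset.mem_image]
            refine ⟨p.1, ?_, by rw [← hp]⟩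
            rw [hA, Finset.mem_filter]
            exact ⟨Finset.mem_univ _, by rw [← hp]; exact heB⟩
      -- bound on the number of incident men
      have hinjf : ∀ a ∈ A, ∀ b ∈ A,
          (Sum.inr (a, w) : MCol k) = Sum.inr (b, w) → a = b := by
        intro a _ b _ hab
        have := Sum.inr.inj hab
        exact congrArg Prod.fst this
      set L : Finset (Fin k) := A.filter (fun a => Loopy k B w a) with hL
      set G : Finset (Fin k) := A.filter (fun a => ¬ Loopy k B w a) with hG
      have hLG : L.card + G.card = A.card := by
        rw [hL, hG]; exact Finset.card_filter_add_card_filter_not _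
      have hcardF : 3 ≤ (insert (Sum.inl (Sum.inr w) : MCol k)
          (A.image (fun a => (Sum.inr (a, w) : MCol k)))).card :=
        le_trans h3 (Finset.card_le_card hFsub)
      have hG2 : 2 ≤ G.card := by
        by_cases hlw : (Sum.inl (Sum.inr w) : MCol k) ∈ B
        · -- w is a root: no incident component may contain a loop
          have hLempty : L = ∅ := by
            rw [hL, Finset.filter_eq_empty_iff]
            intro a ha hLoopy
            exact dep3 hli (hAmem a ha) hlw hLoopy
          have hA2 : 2 ≤ A.card := by
            have := Finset.card_insert_le (Sum.inl (Sum.inr w) : MCol k)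
              (A.image (fun a => (Sum.inr (a, w) : MCol k)))
            have himg := Finset.card_image_le (s := A)
              (f := fun a => (Sum.inr (a, w) : MCol k))
            omega
          rw [hLempty] at hLG
          simp at hLG
          omega
        · -- w is not a root: at most one incident component may contain a loop
          have hL1 : L.card ≤ 1 := by
            rw [Finset.card_le_one]
            intro a ha b hb
            by_contra hne
            rw [hL, Finset.mem_filter] at ha hb
            exact dep2 hli (hAmem a ha.1) (hAmem b hb.1) hne ha.2 hb.2
          have hA3 : 3 ≤ A.card := by
            have hsub2 : B.filter (fun e => MInc (Sum.inr w : MVert k) e) ⊆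
                A.image (fun a => (Sum.inr (a, w) : MCol k)) := by
              intro e he
              have hmem := hFsub he
              rcases Finset.mem_insert.mp hmem with heq | hm
              · exfalso
                rw [Finset.mem_filter] at he
                exact hlw (heq ▸ he.1)
              · exact hm
            have h1 := le_trans h3 (Finset.card_le_card hsub2)
            have himg := Finset.card_image_le (s := A)
              (f := fun a => (Sum.inr (a, w) : MCol k))
            omega
          omega
      obtain ⟨m, hmG, m', hm'G, hne⟩ := Finset.one_lt_card.mp (by omega : 1 < G.card)
      rw [hG, Finset.mem_filter] at hmG hm'G
      have hmB : (Sum.inr (m, w) : MCol k) ∈ B := hAmem m hmG.1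
      have hm'B : (Sum.inr (m', w) : MCol k) ∈ B := hAmem m' hm'G.1
      have hnr : ¬ Reach k B w (Sum.inl m) (Sum.inl m') :=
        fun hr => dep1 hli hmB hm'B hne hr
      have hnl_m : ∀ v, Reach k B w (Sum.inl m) v → (Sum.inl v : MCol k) ∉ B :=
        fun v hv hvB => hmG.2 ⟨v, hv, hvB⟩
      have hnl_m' : ∀ v, Reach k B w (Sum.inl m') v → (Sum.inl v : MCol k) ∉ B :=
        fun v hv hvB => hm'G.2 ⟨v, hv, hvB⟩
      have hxm : 0 < x (Sum.inr (m, w)) := hnondeg B x hBfull _ hmB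
      have hxm' : 0 < x (Sum.inr (m', w)) := hnondeg B x hBfull _ hm'B
      have S1 := zcut_ge_one hε0 hε1 x z hxB hxc hx0 hxm hzB hzc hnl_m
      have S2 := zcut_ge_one hε0 hε1 x z hxB hxc hx0 hxm' hzB hzc hnl_m'
      -- the two groups are disjoint and bounded by the constraint at w
      have hcomb : ∀ a : Fin k,
          (if Reach k B w (Sum.inl m) (Sum.inl a) then z (Sum.inr (a, w)) else 0)
          + (if Reach k B w (Sum.inl m') (Sum.inl a) then z (Sum.inr (a, w)) else 0)
          ≤ z (Sum.inr (a, w)) := by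
        intro a
        by_cases h1 : Reach k B w (Sum.inl m) (Sum.inl a)
        · by_cases h2 : Reach k B w (Sum.inl m') (Sum.inl a)
          · exact absurd (h1.trans (reach_symm h2)) hnr
          · simp [h1, h2]
        · by_cases h2 : Reach k B w (Sum.inl m') (Sum.inl a)
          · simp [h1, h2]
          · simp [h1, h2, hz0]
      have hzsum_le : ∑ a : Fin k, z (Sum.inr (a, w)) ≤ 1 := by
        have hzw := hzc (Sum.inr w)
        have heq : ∀ a : Fin k, z (Sum.inr (a, w))
            = MA k (Sum.inr w) (Sum.inr (a, w)) * z (Sum.inr (a, w)) := by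
          intro a
          have : MA k (Sum.inr w : MVert k) (Sum.inr (a, w)) = 1 := by
            simp [MA]
          rw [this, one_mul]
        rw [Finset.sum_congr rfl (fun a _ => heq a)]
        have himgsum : ∑ e ∈ Finset.univ.image (fun a : Fin k => (Sum.inr (a, w) : MCol k)),
            MA k (Sum.inr w : MVert k) e * z e
            = ∑ a : Fin k, MA k (Sum.inr w : MVert k) (Sum.inr (a, w)) * z (Sum.inr (a, w)) :=
          Finset.sum_image (by
            intro a _ b _ hab
            exact congrArg Prod.fst (Sum.inr.inj hab))
        rw [← himgsum]
        dsimp only at hzw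
        rw [← hzw]
        apply Finset.sum_le_sum_of_subset_of_nonneg (Finset.subset_univ _)
        intro e _ _
        exact mul_nonneg (MA_nonneg k _ e) (hz0 e)
      have hsum2 : (2:ℚ) ≤ ∑ a : Fin k, z (Sum.inr (a, w)) := by
        calc (2:ℚ) ≤ (∑ a : Fin k, (if Reach k B w (Sum.inl m) (Sum.inl a)
                then z (Sum.inr (a, w)) else 0))
              + (∑ a : Fin k, (if Reach k B w (Sum.inl m') (Sum.inl a)
                then z (Sum.inr (a, w)) else 0)) := by linarith
          _ = ∑ a : Fin k, ((if Reach k B w (Sum.inl m) (Sum.inl a)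
                then z (Sum.inr (a, w)) else 0)
              + (if Reach k B w (Sum.inl m') (Sum.inl a)
                then z (Sum.inr (a, w)) else 0)) := by
                rw [Finset.sum_add_distrib]
          _ ≤ ∑ a : Fin k, z (Sum.inr (a, w)) :=
                Finset.sum_le_sum (fun a _ => hcomb a)
      linarith
end

section
/- Consider Scarf's algorithm as a sequence of Scarf pairs (B_0, D_0), (B_1, D_1), …, where each B_i is a feasible basis, each D_i is an ordinal basis, |B_i ∩ D_i| = n − 1 for all non-terminal pairs, each cardinal pivot brings the unique column of D_{i-1} \ B_{i-1} into B_{i-1}, and each ordinal pivot removes from D_{i-1} the column that just left B. Then the algorithm reaches a pair with B_i = D_i if and only if, in the i-th iteration, either column 1 leaves the feasible basis B_{i-1} during the cardinal pivot, or column 1 enters the ordinal basis D_{i-1} during the ordinal pivot. -/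
/-- **Termination characterization for Scarf's algorithm.** Consider one
iteration starting from a Scarf pair `(B, D)`: `B` and `D` are `n`-sets with
`|B ∩ D| = n − 1`, column `1` (the column `col1`) lies in `B` but not in `D`,
the cardinal pivot brings the unique column `jt` of `D \ B` into `B` while some
`jℓ ∈ B` leaves (giving `B' = (B \ {jℓ}) ∪ {jt}`), and — unless `jℓ` is column
`1`, in which case the algorithm halts with `D' = D` — the ordinal pivot
removes `jℓ` from `D` and brings in the column `jstar ∉ D` (giving
`D' = (D \ {jℓ}) ∪ {jstar}`). Then `B ≠ D` and the iteration ends with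
`B' = D'` if and only if column `1` leaves `B` or column `1` enters `D`. -/
theorem scarf_halts_iff (n m : ℕ) (hn : 0 < n)
    (B D B' D' : Finset (Fin (n + m)))
    (col1 jt jℓ jstar : Fin (n + m)) (hcol1 : (col1 : ℕ) = 0)
    (hBcard : B.card = n) (hDcard : D.card = n)
    (hB1 : col1 ∈ B) (hD1 : col1 ∉ D)
    (hinter : (B ∩ D).card = n - 1)
    (hjt : D \ B = {jt})
    (hjl : jℓ ∈ B)
    (hB' : B' = insert jt (B.erase jℓ))
    (hstop : jℓ = col1 → D' = D)
    (hpiv : jℓ ≠ col1 → D' = insert jstar (D.erase jℓ) ∧ jstar ∉ D) :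
    (B ≠ D ∧ B' = D') ↔ (jℓ = col1 ∨ jstar = col1) := by

  have hjtBD : jt ∈ D \ B := by rw [hjt]; exact Finset.mem_singleton_self jt
  have hjtD : jt ∈ D := (Finset.mem_sdiff.mp hjtBD).1
  have hjtB : jt ∉ B := (Finset.mem_sdiff.mp hjtBD).2
  have hBD : B \ D = {col1} := by
    have h1 : (B \ D).card + (B ∩ D).card = B.card := Finset.card_sdiff_add_card_inter B D
    have h2 : (B \ D).card = 1 := by omega
    obtain ⟨a, ha⟩ := Finset.card_eq_one.mp h2
    have hc : col1 ∈ B \ D := Finset.mem_sdiff.mpr ⟨hB1, hD1⟩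
    rw [ha] at hc
    rw [ha, Finset.mem_singleton.mp hc]
  have hmemB : ∀ x, x ∈ B ↔ (x ∈ D ∧ x ≠ jt) ∨ x = col1 := by
    intro x
    constructor
    · intro hx
      by_cases hxD : x ∈ D
      · exact Or.inl ⟨hxD, fun h => hjtB (h ▸ hx)⟩
      · right
        have hx' : x ∈ B \ D := Finset.mem_sdiff.mpr ⟨hx, hxD⟩
        rwa [hBD, Finset.mem_singleton] at hx'
    · rintro (⟨hxD, hxjt⟩ | rfl)
      · by_contra hxB
        have hx' : x ∈ D \ B := Finset.mem_sdiff.mpr ⟨hxD, hxB⟩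
        rw [hjt, Finset.mem_singleton] at hx'
        exact hxjt hx'
      · exact hB1
  have hBneD : B ≠ D := fun h => hD1 (h ▸ hB1)
  constructor
  · rintro ⟨-, hBD'⟩
    by_cases hc : jℓ = col1
    · exact Or.inl hc
    · right
      obtain ⟨hD'eq, hjsD⟩ := hpiv hc
      have hcol1B' : col1 ∈ B' := by
        rw [hB']
        exact Finset.mem_insert_of_mem (Finset.mem_erase.mpr ⟨fun h => hc h.symm, hB1⟩)
      rw [hBD', hD'eq, Finset.mem_insert] at hcol1B'
      rcases hcol1B' with h | h
      · exact h.symm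
      · exact absurd (Finset.mem_of_mem_erase h) hD1
  · intro hcase
    refine ⟨hBneD, ?_⟩
    rcases hcase with rfl | rfl
    · -- jℓ = col1
      rw [hstop rfl, hB']
      ext x
      simp only [Finset.mem_insert, Finset.mem_erase]
      constructor
      · rintro (rfl | ⟨hne, hxB⟩)
        · exact hjtD
        · rcases (hmemB x).mp hxB with ⟨hxD, _⟩ | rfl
          · exact hxD
          · exact absurd rfl hne
      · intro hxD
        by_cases hx : x = jt
        · exact Or.inl hx
        · exact Or.inr ⟨fun h => hD1 (h ▸ hxD), (hmemB x).mpr (Or.inl ⟨hxD, hx⟩)⟩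
    · -- jstar = col1
      by_cases hc : jℓ = jstar
      · subst hc
        rw [hstop rfl, hB']
        ext x
        simp only [Finset.mem_insert, Finset.mem_erase]
        constructor
        · rintro (rfl | ⟨hne, hxB⟩)
          · exact hjtD
          · rcases (hmemB x).mp hxB with ⟨hxD, _⟩ | rfl
            · exact hxD
            · exact absurd rfl hne
        · intro hxD
          by_cases hx : x = jt
          · exact Or.inl hx
          · exact Or.inr ⟨fun h => hD1 (h ▸ hxD), (hmemB x).mpr (Or.inl ⟨hxD, hx⟩)⟩
      · obtain ⟨hD'eq, hjsD⟩ := hpiv hc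
        have hjlD : jℓ ∈ D ∧ jℓ ≠ jt := by
          rcases (hmemB jℓ).mp hjl with h | h
          · exact h
          · exact absurd h hc
        rw [hB', hD'eq]
        ext x
        simp only [Finset.mem_insert, Finset.mem_erase]
        constructor
        · rintro (rfl | ⟨hne, hxB⟩)
          · exact Or.inr ⟨fun h => hjtB (h ▸ hjl), hjtD⟩
          · rcases (hmemB x).mp hxB with ⟨hxD, _⟩ | rfl
            · exact Or.inr ⟨hne, hxD⟩
            · exact Or.inl rfl
        · rintro (rfl | ⟨hne, hxD⟩)
          · exact Or.inr ⟨fun h => hc h.symm, hB1⟩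
          · by_cases hx : x = jt
            · exact Or.inl hx
            · exact Or.inr ⟨hne, (hmemB x).mpr (Or.inl ⟨hxD, hx⟩)⟩
end
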